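/- arXiv:1308.2799 — 5 statements merged into one kernel-verified Lean document; each statement's English description precedes it below -/
import Mathlib

section
/- Let F be a finite group acting by isometries on a metric space Z. Then the covering dimension of Z equals the covering dimension of the quotient metric space F\Z. -/
open Set

/-- Covering dimension `≤ n`: every open cover has an open refinement in which
every point lies in at most `n+1` members (valid characterization for metric spaces). -/
def CoverDimLE (X : Type*) [TopologicalSpace X] (n : ℕ) : Prop :=
  ∀ U : Set (Set X), (∀ u ∈ U, IsOpen u) → ⋃₀ U = Set.univ →
    ∃ V : Set (Set X), (∀ v ∈ V, IsOpen v) ∧ ⋃₀ V = Set.univ ∧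
      (∀ v ∈ V, ∃ u ∈ U, v ⊆ u) ∧ ∀ x : X, {v ∈ V | x ∈ v}.encard ≤ n + 1

/-!
The orbit map `Z → F\Z` is `1`-Lipschitz and open, and over a small ball about `[z]` it splits
into disjoint balls about the points of the orbit of `z`; lifting a refinement of a cover of `F\Z`
sheet by sheet gives `dim Z ≤ dim F\Z`.

Conversely, induct on `|F|`. The image of the fixed-point set is an isometric copy of a closed
subset of `Z`. Near any other orbit `[w]`, `F\Z` is isometric to a ball in `Stab(w)\Z`, which has
dimension at most `dim Z` by induction. The pieces are glued by the countable sum theorem: a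
closed set that is locally of dimension at most `n` is first cut, along a `σ`-uniformly separated
refinement of a cover by such neighbourhoods, into countably many closed sets, each a uniformly
separated union of small closed pieces.
-/

open Metric Filter Topology

universe u

theorem CoverDimLE.of_homeomorph {X Y : Type*} [TopologicalSpace X] [TopologicalSpace Y]
    {n : ℕ} (e : X ≃ₜ Y) (h : CoverDimLE X n) : CoverDimLE Y n := by
  intro U hUo hUc
  obtain ⟨V, hVo, hVc, hVU, hVn⟩ := h ((e ⁻¹' ·) '' U)
    (by rintro _ ⟨u, hu, rfl⟩; exact (hUo u hu).preimage e.continuous)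
    (by rw [sUnion_image, ← preimage_iUnion₂, ← sUnion_eq_biUnion, hUc, preimage_univ])
  refine ⟨(e.symm ⁻¹' ·) '' V, ?_, ?_, ?_, fun y => ?_⟩
  · rintro _ ⟨v, hv, rfl⟩
    exact (hVo v hv).preimage e.symm.continuous
  · rw [sUnion_image, ← preimage_iUnion₂, ← sUnion_eq_biUnion, hVc, preimage_univ]
  · rintro _ ⟨v, hv, rfl⟩
    obtain ⟨_, ⟨u, hu, rfl⟩, hvu⟩ := hVU v hv
    exact ⟨u, hu, fun y hy => by simpa using hvu hy⟩
  · calc {w ∈ (e.symm ⁻¹' ·) '' V | y ∈ w}.encard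
        ≤ ((e.symm ⁻¹' ·) '' {v ∈ V | e.symm y ∈ v}).encard := by
          refine encard_le_encard ?_
          rintro _ ⟨⟨v, hv, rfl⟩, hy⟩
          exact ⟨v, ⟨hv, hy⟩, rfl⟩
      _ ≤ n + 1 := (encard_image_le _ _).trans (hVn _)

section Relative

variable {X : Type u} [TopologicalSpace X] {n : ℕ}

/-- Covering dimension of `A` relative to `X`. Refinements are precise (indexed like the cover),
so that they can be glued index by index. -/
def CoverDimOnLE (A : Set X) (n : ℕ) : Prop :=
  ∀ (ι : Type u) (V : ι → Set X), (∀ i, IsOpen (V i)) → A ⊆ ⋃ i, V i →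
    ∃ W : ι → Set X, (∀ i, IsOpen (W i)) ∧ (∀ i, W i ⊆ V i) ∧ A ⊆ ⋃ i, W i ∧
      ∀ x ∈ A, {i | x ∈ W i}.encard ≤ n + 1

theorem CoverDimOnLE.coverDimLE_subtype {A : Set X} (h : CoverDimOnLE A n) :
    CoverDimLE A n := by
  intro U hUo hUc
  have hO : ∀ u : U, ∃ O : Set X, IsOpen O ∧ Subtype.val ⁻¹' O = (u : Set A) :=
    fun u => isOpen_induced_iff.mp (hUo u u.2)
  choose O hOo hOu using hO
  obtain ⟨W, hWo, hWO, hAW, hWn⟩ := h U O hOo fun x hx => by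
    obtain ⟨u, hu, hxu⟩ := hUc.symm ▸ mem_univ (⟨x, hx⟩ : A)
    exact mem_iUnion.mpr ⟨⟨u, hu⟩, (hOu ⟨u, hu⟩).symm.subset hxu⟩
  refine ⟨range fun u => Subtype.val ⁻¹' W u, ?_, ?_, ?_, fun x => ?_⟩
  · rintro _ ⟨u, rfl⟩
    exact (hWo u).preimage continuous_subtype_val
  · refine eq_univ_of_forall fun x => ?_
    obtain ⟨u, hu⟩ := mem_iUnion.mp (hAW x.2)
    exact ⟨_, ⟨u, rfl⟩, hu⟩
  · rintro _ ⟨u, rfl⟩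
    exact ⟨u, u.2, (preimage_mono (hWO u)).trans (hOu u).subset⟩
  · calc {v ∈ range fun u => Subtype.val ⁻¹' W u | x ∈ v}.encard
        ≤ ((fun u => Subtype.val ⁻¹' W u) '' {u | (x : X) ∈ W u}).encard := by
          refine encard_le_encard ?_
          rintro _ ⟨⟨u, rfl⟩, hx⟩
          exact ⟨u, hx, rfl⟩
      _ ≤ n + 1 := (encard_image_le _ _).trans (hWn x x.2)

theorem CoverDimOnLE.of_coverDimLE_subtype {A : Set X} (h : CoverDimLE A n) :
    CoverDimOnLE A n := by
  intro ι V hVo hAV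
  cases isEmpty_or_nonempty ι
  · exact ⟨V, hVo, fun _ => subset_rfl, hAV, fun _ _ => by simp [Set.eq_empty_of_isEmpty]⟩
  obtain ⟨W, hWo, hWc, hWV, hWn⟩ := h (range fun i => Subtype.val ⁻¹' V i)
    (by rintro _ ⟨i, rfl⟩; exact (hVo i).preimage continuous_subtype_val)
    (by
      refine eq_univ_of_forall fun x => ?_
      obtain ⟨i, hi⟩ := mem_iUnion.mp (hAV x.2)
      exact ⟨_, ⟨i, rfl⟩, hi⟩)
  have hlift : ∀ w : Set A, ∃ (i : ι) (O : Set X), w ∈ W →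
      w ⊆ Subtype.val ⁻¹' V i ∧ IsOpen O ∧ Subtype.val ⁻¹' O = w := fun w => by
    by_cases hw : w ∈ W
    · obtain ⟨_, ⟨i, rfl⟩, hwi⟩ := hWV w hw
      obtain ⟨O, hO, hOw⟩ := isOpen_induced_iff.mp (hWo w hw)
      exact ⟨i, O, fun _ => ⟨hwi, hO, hOw⟩⟩
    · exact ⟨Classical.arbitrary ι, ∅, fun h => absurd h hw⟩
  choose idx O hlift using hlift
  refine ⟨fun i => ⋃ w ∈ {w ∈ W | idx w = i}, O w ∩ V i, fun i => ?_, fun i => ?_,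
    fun x hx => ?_, fun x hx => ?_⟩
  · exact isOpen_biUnion fun w hw => (hlift w hw.1).2.1.inter (hVo i)
  · exact iUnion₂_subset fun w _ => inter_subset_right
  · obtain ⟨w, hw, hxw⟩ := hWc.symm ▸ mem_univ (⟨x, hx⟩ : A)
    exact mem_iUnion.mpr ⟨idx w, mem_biUnion ⟨hw, rfl⟩
      ⟨(hlift w hw).2.2.superset hxw, (hlift w hw).1 hxw⟩⟩
  · calc {i | x ∈ ⋃ w ∈ {w ∈ W | idx w = i}, O w ∩ V i}.encard
        ≤ (idx '' {w ∈ W | (⟨x, hx⟩ : A) ∈ w}).encard := by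
          refine encard_le_encard fun i hi => ?_
          obtain ⟨w, ⟨hw, rfl⟩, hxw, -⟩ := mem_iUnion₂.mp hi
          exact ⟨w, ⟨hw, (hlift w hw).2.2.subset hxw⟩, rfl⟩
      _ ≤ n + 1 := (encard_image_le _ _).trans (hWn _)

theorem coverDimOnLE_iff_coverDimLE_subtype (A : Set X) :
    CoverDimOnLE A n ↔ CoverDimLE A n :=
  ⟨CoverDimOnLE.coverDimLE_subtype, CoverDimOnLE.of_coverDimLE_subtype⟩

theorem coverDimOnLE_univ_iff : CoverDimOnLE (univ : Set X) n ↔ CoverDimLE X n :=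
  (coverDimOnLE_iff_coverDimLE_subtype univ).trans
    ⟨.of_homeomorph (Homeomorph.Set.univ X), .of_homeomorph (Homeomorph.Set.univ X).symm⟩

theorem coverDimOnLE_of_forall_cover_univ {A : Set X} (hA : IsClosed A)
    (h : ∀ (ι : Type u) (V : ι → Set X), (∀ i, IsOpen (V i)) → ⋃ i, V i = univ →
      ∃ W : ι → Set X, (∀ i, IsOpen (W i)) ∧ (∀ i, W i ⊆ V i) ∧ A ⊆ ⋃ i, W i ∧
        ∀ x ∈ A, {i | x ∈ W i}.encard ≤ n + 1) :
    CoverDimOnLE A n := by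
  intro ι V hVo hAV
  obtain ⟨W, hWo, hWV, hAW, hWn⟩ := h (Option ι) (Option.elim' Aᶜ V)
    (by rintro (_ | i); exacts [hA.isOpen_compl, hVo i])
    (by
      refine eq_univ_of_forall fun x => ?_
      by_cases hx : x ∈ A
      · obtain ⟨i, hi⟩ := mem_iUnion.mp (hAV hx)
        exact mem_iUnion.mpr ⟨some i, hi⟩
      · exact mem_iUnion.mpr ⟨none, hx⟩)
  refine ⟨fun i => W (some i), fun i => hWo _, fun i => hWV (some i), fun x hx => ?_,
    fun x hx => ?_⟩
  · obtain ⟨_ | i, hi⟩ := mem_iUnion.mp (hAW hx)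
    · exact absurd hx (hWV none hi)
    · exact mem_iUnion.mpr ⟨i, hi⟩
  · exact (encard_le_encard_of_injOn (f := some) (fun i hi => hi)
      (Option.some_injective _).injOn).trans (hWn x hx)

theorem CoverDimOnLE.mono {A B : Set X} (h : CoverDimOnLE A n) (hB : IsClosed B)
    (hBA : B ⊆ A) : CoverDimOnLE B n :=
  coverDimOnLE_of_forall_cover_univ hB fun ι V hVo hVc => by
    obtain ⟨W, hWo, hWV, hAW, hWn⟩ := h ι V hVo (hVc ▸ subset_univ A)
    exact ⟨W, hWo, hWV, hBA.trans hAW, fun x hx => hWn x (hBA hx)⟩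

theorem CoverDimLE.subtype (h : CoverDimLE X n) {A : Set X} (hA : IsClosed A) :
    CoverDimLE A n :=
  ((coverDimOnLE_univ_iff.2 h).mono hA (subset_univ A)).coverDimLE_subtype

end Relative

theorem CoverDimLE.of_pairwiseDisjoint_sheets {X : Type*} {Y : Type u} [TopologicalSpace X]
    [TopologicalSpace Y] {n : ℕ} {p : X → Y} (hp : Continuous p) (hY : CoverDimLE Y n)
    (h : ∀ U : Set (Set X), (∀ u ∈ U, IsOpen u) → ⋃₀ U = univ → ∀ y, ∃ b : Set Y,
      IsOpen b ∧ y ∈ b ∧ ∃ S : Set (Set X), p ⁻¹' b ⊆ ⋃₀ S ∧ S.PairwiseDisjoint id ∧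
        ∀ s ∈ S, IsOpen s ∧ ∃ u ∈ U, s ⊆ u) :
    CoverDimLE X n := by
  intro U hUo hUc
  choose b hbo hyb S hbS hSd hS using h U hUo hUc
  obtain ⟨W, hWo, hWb, hYW, hWn⟩ := coverDimOnLE_univ_iff.2 hY Y b hbo
    fun y _ => mem_iUnion.mpr ⟨y, hyb y⟩
  have hsheet : ∀ y, ∀ s ∈ S y, ∀ x ∈ s, {s' ∈ S y | x ∈ s'} = {s} := fun y s hs x hx =>
    Set.ext fun s' => ⟨fun h => (hSd y).elim_set h.1 hs x h.2 hx, fun h => h ▸ ⟨hs, hx⟩⟩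
  -- Over each member of `W`, a point of `X` lies in at most one sheet.
  refine ⟨⋃ y, (fun s => p ⁻¹' W y ∩ s) '' S y, ?_, ?_, ?_, fun x => ?_⟩
  · simp only [mem_iUnion, mem_image]
    rintro _ ⟨y, s, hs, rfl⟩
    exact ((hWo y).preimage hp).inter (hS y s hs).1
  · refine eq_univ_of_forall fun x => ?_
    obtain ⟨y, hy⟩ := mem_iUnion.mp (hYW (mem_univ (p x)))
    obtain ⟨s, hs, hxs⟩ := hbS y (hWb y hy)
    exact ⟨_, mem_iUnion.mpr ⟨y, s, hs, rfl⟩, hy, hxs⟩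
  · simp only [mem_iUnion, mem_image]
    rintro _ ⟨y, s, hs, rfl⟩
    obtain ⟨u, hu, hsu⟩ := (hS y s hs).2
    exact ⟨u, hu, inter_subset_right.trans hsu⟩
  · calc {v ∈ ⋃ y, (fun s => p ⁻¹' W y ∩ s) '' S y | x ∈ v}.encard
        ≤ ((fun y => p ⁻¹' W y ∩ ⋃₀ {s ∈ S y | x ∈ s}) '' {y | p x ∈ W y}).encard := by
          refine encard_le_encard ?_
          simp only [mem_iUnion, mem_image]
          rintro _ ⟨⟨y, s, hs, rfl⟩, hy, hxs⟩
          exact ⟨y, hy, congrArg (p ⁻¹' W y ∩ ·) (by rw [hsheet y s hs x hxs, sUnion_singleton])⟩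
      _ ≤ n + 1 := (encard_image_le _ _).trans (hWn (p x) (mem_univ _))

section SumTheorem

variable {X : Type u} [TopologicalSpace X] {n : ℕ}

theorem CoverDimOnLE.exists_shrinking_eventually_encard_le [NormalSpace X] {A : Set X}
    (hA : IsClosed A) (h : CoverDimOnLE A n) {ι : Type u} {V : ι → Set X}
    (hVo : ∀ i, IsOpen (V i)) (hVc : ⋃ i, V i = univ) (hVlf : LocallyFinite V) :
    ∃ W : ι → Set X, (∀ i, IsOpen (W i)) ∧ (∀ i, W i ⊆ V i) ∧ ⋃ i, W i = univ ∧
      ∀ x ∈ A, ∀ᶠ y in 𝓝 x, {i | y ∈ W i}.encard ≤ n + 1 := by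
  obtain ⟨W₀, hW₀o, hW₀V, hAW₀, hW₀n⟩ := h ι V hVo (hVc ▸ subset_univ A)
  set V₁ := fun i => W₀ i ∪ V i \ A
  have hV₁V : ∀ i, V₁ i ⊆ V i := fun i => union_subset (hW₀V i) sdiff_subset
  have hV₁c : ⋃ i, V₁ i = univ := by
    refine eq_univ_of_forall fun x => ?_
    by_cases hx : x ∈ A
    · obtain ⟨i, hi⟩ := mem_iUnion.mp (hAW₀ hx)
      exact mem_iUnion.mpr ⟨i, Or.inl hi⟩
    · obtain ⟨i, hi⟩ := mem_iUnion.mp (hVc.symm ▸ mem_univ x : x ∈ ⋃ i, V i)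
      exact mem_iUnion.mpr ⟨i, Or.inr ⟨hi, hx⟩⟩
  have hV₁lf : LocallyFinite V₁ := hVlf.subset hV₁V
  obtain ⟨W, hWc, hWo, hWV₁⟩ := exists_subset_iUnion_closure_subset isClosed_univ
    (fun i => (hW₀o i).union ((hVo i).sdiff hA)) (fun x _ => hV₁lf.point_finite x) hV₁c.ge
  refine ⟨W, hWo, fun i => subset_closure.trans ((hWV₁ i).trans (hV₁V i)),
    univ_subset_iff.mp hWc, fun x hx => ?_⟩
  filter_upwards [(hV₁lf.subset hWV₁).eventually_subset (fun _ => isClosed_closure) x] with y hy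
  calc {i | y ∈ W i}.encard ≤ {i | x ∈ W₀ i}.encard := encard_le_encard fun i hi => by
        obtain h | h := hWV₁ i (hy (subset_closure hi))
        exacts [h, absurd hx h.2]
    _ ≤ n + 1 := hW₀n x hx

theorem exists_refinement_encard_le_iUnion_nat [NormalSpace X] {A : ℕ → Set X}
    (hAc : ∀ k, IsClosed (A k)) (h : ∀ k, CoverDimOnLE (A k) n) {ι : Type u}
    {V : ι → Set X} (hVo : ∀ i, IsOpen (V i)) (hVc : ⋃ i, V i = univ)
    (hVlf : LocallyFinite V) :
    ∃ W : ι → Set X, (∀ i, IsOpen (W i)) ∧ (∀ i, W i ⊆ V i) ∧ (⋃ k, A k) ⊆ ⋃ i, W i ∧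
      ∀ x ∈ ⋃ k, A k, {i | x ∈ W i}.encard ≤ n + 1 := by
  let Shrinking := {W : ι → Set X // (∀ i, IsOpen (W i)) ∧ W ≤ V ∧ ⋃ i, W i = univ}
  have step (k : ℕ) (W : Shrinking) : ∃ W' : Shrinking, W'.1 ≤ W.1 ∧
      ∀ x ∈ A k, ∀ᶠ y in 𝓝 x, {i | y ∈ W'.1 i}.encard ≤ n + 1 := by
    obtain ⟨W', hW'o, hW'W, hW'c, hW'n⟩ := (h k).exists_shrinking_eventually_encard_le (hAc k)
      W.2.1 W.2.2.2 (hVlf.subset W.2.2.1)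
    exact ⟨⟨W', hW'o, fun i => (hW'W i).trans (W.2.2.1 i), hW'c⟩, hW'W, hW'n⟩
  choose next hnext_le hnext using step
  let seq : ℕ → Shrinking := fun k => Nat.rec ⟨V, hVo, le_rfl, hVc⟩ next k
  have hanti : Antitone fun k => (seq k).1 := antitone_nat_of_succ_le fun k => hnext_le k _
  let good (k : ℕ) := {x | ∀ᶠ y in 𝓝 x, {i | y ∈ (seq (k + 1)).1 i}.encard ≤ n + 1}
  have hgood : ∀ k, A k ⊆ good k := fun k => hnext k (seq k)
  -- A point is counted only at the first stage whose shrinking has order `≤ n + 1` near it;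
  -- later stages are finer.
  refine ⟨fun i => ⋃ k, (seq (k + 1)).1 i ∩ good k, fun i => ?_, fun i => ?_, fun x hx => ?_,
    fun x hx => ?_⟩
  · exact isOpen_iUnion fun k => ((seq (k + 1)).2.1 i).inter isOpen_setOfPred_eventually_nhds
  · exact iUnion_subset fun k => inter_subset_left.trans ((seq (k + 1)).2.2.1 i)
  · obtain ⟨k, hk⟩ := mem_iUnion.mp hx
    obtain ⟨i, hi⟩ := mem_iUnion.mp ((seq (k + 1)).2.2.2.symm ▸ mem_univ x :
      x ∈ ⋃ i, (seq (k + 1)).1 i)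
    exact mem_iUnion.mpr ⟨i, mem_iUnion.mpr ⟨k, hi, hgood k hk⟩⟩
  · classical
    have hex : ∃ k, x ∈ good k := by
      obtain ⟨k, hk⟩ := mem_iUnion.mp hx
      exact ⟨k, hgood k hk⟩
    calc {i | x ∈ ⋃ k, (seq (k + 1)).1 i ∩ good k}.encard
        ≤ {i | x ∈ (seq (Nat.find hex + 1)).1 i}.encard := encard_le_encard fun i hi => by
          obtain ⟨k, hki, hkx⟩ := mem_iUnion.mp hi
          exact hanti (Nat.succ_le_succ (Nat.find_min' hex hkx)) i hki
      _ ≤ n + 1 := (Nat.find_spec hex).self_of_nhds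

theorem CoverDimOnLE.iUnion [ParacompactSpace X] [NormalSpace X] {κ : Type*} [Countable κ]
    {A : κ → Set X} (hAc : ∀ k, IsClosed (A k)) (h : ∀ k, CoverDimOnLE (A k) n)
    (hc : IsClosed (⋃ k, A k)) : CoverDimOnLE (⋃ k, A k) n := by
  cases isEmpty_or_nonempty κ
  · intro ι V hVo _
    exact ⟨V, hVo, fun _ => subset_rfl, by simp, by simp⟩
  obtain ⟨e, he⟩ := exists_surjective_nat κ
  rw [← he.iUnion_comp] at hc ⊢
  refine coverDimOnLE_of_forall_cover_univ hc fun ι V hVo hVc => ?_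
  obtain ⟨V', hV'o, hV'c, hV'lf, hV'V⟩ := precise_refinement V hVo hVc
  obtain ⟨W, hWo, hWV', hAW, hWn⟩ := exists_refinement_encard_le_iUnion_nat
    (fun k => hAc (e k)) (fun k => h (e k)) hV'o hV'c hV'lf
  exact ⟨W, hWo, fun i => (hWV' i).trans (hV'V i), hAW, hWn⟩

end SumTheorem

theorem IsClosed.iUnion_compl_thickening_one_div {X : Type*} [PseudoEMetricSpace X]
    {E : Set X} (hE : IsClosed E) : ⋃ l : ℕ, (thickening (1 / (l + 1)) E)ᶜ = Eᶜ := by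
  refine subset_antisymm (iUnion_subset fun l x hx hxE =>
    hx (self_subset_thickening Nat.one_div_pos_of_nat _ hxE)) fun x hx => ?_
  rw [mem_compl_iff, ← hE.closure_eq, closure_eq_iInter_thickening] at hx
  simp only [mem_iInter, not_forall] at hx
  obtain ⟨δ, hδ, hxδ⟩ := hx
  obtain ⟨l, hl⟩ := exists_nat_one_div_lt hδ
  exact mem_iUnion.mpr ⟨l, fun h => hxδ (thickening_mono hl.le _ h)⟩

section Metric

variable {X : Type u} [MetricSpace X] {n : ℕ}

def UniformlySeparated {ι : Type*} (δ : ℝ) (C : ι → Set X) : Prop :=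
  ∀ i j, ∀ x ∈ C i, ∀ y ∈ C j, dist x y < δ → i = j

theorem UniformlySeparated.locallyFinite {ι : Type*} {δ : ℝ} {C : ι → Set X}
    (h : UniformlySeparated δ C) (hδ : 0 < δ) : LocallyFinite C := by
  refine fun x => ⟨ball x (δ / 2), ball_mem_nhds x (half_pos hδ), Subsingleton.finite ?_⟩
  rintro i ⟨y, hyi, hy⟩ j ⟨z, hzj, hz⟩
  refine h i j y hyi z hzj ?_
  calc dist y z ≤ dist y x + dist x z := dist_triangle y x z
    _ < δ / 2 + δ / 2 := add_lt_add (mem_ball.mp hy) (mem_ball'.mp hz)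
    _ = δ := add_halves δ

theorem CoverDimOnLE.iUnion_of_uniformlySeparated {J : Type*} {C : J → Set X} {δ : ℝ}
    (hδ : 0 < δ) (hsep : UniformlySeparated δ C) (h : ∀ j, CoverDimOnLE (C j) n) :
    CoverDimOnLE (⋃ j, C j) n := by
  intro ι V hVo hCV
  choose W hWo hWV hCW hWn using fun j => h j ι V hVo ((subset_iUnion C j).trans hCV)
  have hsep' : ∀ j j₀, ∀ x ∈ C j₀, x ∈ thickening δ (C j) → j = j₀ := fun j j₀ x hx hxj => by
    obtain ⟨y, hy, hxy⟩ := mem_thickening_iff.mp hxj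
    exact (hsep j₀ j x hx y hy hxy).symm
  refine ⟨fun i => ⋃ j, W j i ∩ thickening δ (C j), fun i => ?_, fun i => ?_, fun x hx => ?_,
    fun x hx => ?_⟩
  · exact isOpen_iUnion fun j => (hWo j i).inter isOpen_thickening
  · exact iUnion_subset fun j => inter_subset_left.trans (hWV j i)
  · obtain ⟨j, hj⟩ := mem_iUnion.mp hx
    obtain ⟨i, hi⟩ := mem_iUnion.mp (hCW j hj)
    exact mem_iUnion.mpr ⟨i, mem_iUnion.mpr ⟨j, hi, self_subset_thickening hδ _ hj⟩⟩
  · obtain ⟨j₀, hj₀⟩ := mem_iUnion.mp hx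
    calc {i | x ∈ ⋃ j, W j i ∩ thickening δ (C j)}.encard ≤ {i | x ∈ W j₀ i}.encard :=
          encard_le_encard fun i hi => by
            obtain ⟨j, hxW, hxj⟩ := mem_iUnion.mp hi
            exact hsep' j j₀ x hj₀ hxj ▸ hxW
      _ ≤ n + 1 := hWn j₀ x hj₀

theorem exists_uniformlySeparated_refinement {ι : Type*} (U : ι → Set X)
    (hUo : ∀ i, IsOpen (U i)) (hUc : ⋃ i, U i = univ) :
    ∃ W : ℕ → ι → Set X, (∀ m i, IsOpen (W m i)) ∧ (∀ m i, W m i ⊆ U i) ∧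
      (⋃ m, ⋃ i, W m i = univ) ∧ ∀ m, ∃ δ > 0, UniformlySeparated δ (W m) := by
  have hne : ∀ x, {i | x ∈ U i}.Nonempty := fun x => mem_iUnion.mp (hUc.symm ▸ mem_univ x)
  have hwf : WellFounded (WellOrderingRel : ι → ι → Prop) := WellOrderingRel.isWellOrder.wf
  let μ (x : X) : ι := hwf.min _ (hne x)
  let r (m : ℕ) : ℝ := 1 / (m + 1)
  have hr : ∀ m, 0 < r m := fun m => Nat.one_div_pos_of_nat
  let centers (m : ℕ) (i : ι) := {x | μ x = i ∧ ball x (r m) ⊆ U i}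
  -- The later of two indices has its centres outside the earlier member, which contains the
  -- `r m`-balls about the earlier centres.
  have hcenters : ∀ m i j, ∀ x ∈ centers m i, ∀ y ∈ centers m j, dist x y < r m → i = j := by
    rintro m i j x ⟨rfl, hx⟩ y ⟨rfl, hy⟩ hxy
    rcases trichotomous_of WellOrderingRel (μ x) (μ y) with h | h | h
    · exact absurd h (hwf.not_lt_min _ (hx (mem_ball'.mpr hxy)))
    · exact h
    · exact absurd h (hwf.not_lt_min _ (hy (mem_ball.mpr hxy)))
  refine ⟨fun m i => ⋃ x ∈ centers m i, ball x (r m / 4), fun m i => ?_, fun m i => ?_, ?_,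
    fun m => ⟨r m / 2, half_pos (hr m), fun i j p hp q hq hpq => ?_⟩⟩
  · exact isOpen_biUnion fun _ _ => isOpen_ball
  · exact iUnion₂_subset fun x hx =>
      (ball_subset_ball (by linarith [hr m])).trans hx.2
  · refine eq_univ_of_forall fun x => ?_
    obtain ⟨ε, hε, hεU⟩ := Metric.isOpen_iff.mp (hUo (μ x)) x (hwf.min_mem _ (hne x))
    obtain ⟨m, hm⟩ := exists_nat_one_div_lt hε
    refine mem_iUnion₂.mpr ⟨m, μ x, mem_biUnion ⟨rfl, (ball_subset_ball hm.le).trans hεU⟩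
      (mem_ball_self (by linarith [hr m]))⟩
  · obtain ⟨x, hx, hpx⟩ := mem_iUnion₂.mp hp
    obtain ⟨y, hy, hqy⟩ := mem_iUnion₂.mp hq
    refine hcenters m i j x hx y hy ?_
    calc dist x y ≤ dist x p + dist p q + dist q y := dist_triangle4 x p q y
      _ < r m / 4 + r m / 2 + r m / 4 :=
        add_lt_add (add_lt_add (mem_ball'.mp hpx) hpq) (mem_ball.mp hqy)
      _ = r m := by ring

theorem coverDimOnLE_of_forall_mem_nhds {A : Set X} (hA : IsClosed A)
    (h : ∀ a ∈ A, ∃ N ∈ 𝓝 a, CoverDimOnLE N n) : CoverDimOnLE A n := by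
  choose! N hN hNn using h
  obtain ⟨W, hWo, hWU, hWc, hWsep⟩ := exists_uniformlySeparated_refinement
    (Option.elim' Aᶜ fun a : A => interior (N a))
    (by rintro (_ | a); exacts [hA.isOpen_compl, isOpen_interior])
    (by
      refine eq_univ_of_forall fun x => ?_
      by_cases hx : x ∈ A
      · exact mem_iUnion.mpr ⟨some ⟨x, hx⟩, mem_interior_iff_mem_nhds.mpr (hN x hx)⟩
      · exact mem_iUnion.mpr ⟨none, hx⟩)
  -- `C m l a` is the part of `A` lying `1 / (l + 1)`-deep inside `W m (some a)`.
  let C (m l : ℕ) (a : A) : Set X := A ∩ (thickening (1 / (l + 1)) (W m (some a))ᶜ)ᶜ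
  have hCc : ∀ m l a, IsClosed (C m l a) := fun m l a =>
    hA.inter isOpen_thickening.isClosed_compl
  have hCW : ∀ m l a, C m l a ⊆ W m (some a) := fun m l a x hx => by
    by_contra hxW
    exact hx.2 (self_subset_thickening Nat.one_div_pos_of_nat _ hxW)
  have hCsep : ∀ m l, ∃ δ > 0, UniformlySeparated δ (C m l) := fun m l => by
    obtain ⟨δ, hδ, hsep⟩ := hWsep m
    exact ⟨δ, hδ, fun a b x hx y hy hxy =>
      Option.some_injective _ (hsep _ _ x (hCW m l a hx) y (hCW m l b hy) hxy)⟩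
  have hPc : ∀ p : ℕ × ℕ, IsClosed (⋃ a, C p.1 p.2 a) := fun ⟨m, l⟩ => by
    obtain ⟨δ, hδ, hsep⟩ := hCsep m l
    exact (hsep.locallyFinite hδ).isClosed_iUnion (hCc m l)
  have hPn : ∀ p : ℕ × ℕ, CoverDimOnLE (⋃ a, C p.1 p.2 a) n := fun ⟨m, l⟩ => by
    obtain ⟨δ, hδ, hsep⟩ := hCsep m l
    refine .iUnion_of_uniformlySeparated hδ hsep fun a => (hNn a a.2).mono (hCc m l a) ?_
    exact ((hCW m l a).trans (hWU m _)).trans interior_subset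
  have hAP : A = ⋃ p : ℕ × ℕ, ⋃ a, C p.1 p.2 a := by
    refine subset_antisymm (fun x hx => ?_) (iUnion_subset fun p => iUnion_subset fun a =>
      inter_subset_left)
    obtain ⟨m, i, hi⟩ := mem_iUnion₂.mp (hWc.symm ▸ mem_univ x : x ∈ ⋃ m, ⋃ i, W m i)
    obtain _ | a := i
    · exact absurd hx (hWU m none hi)
    rw [← compl_compl (W m _), ← (hWo m _).isClosed_compl.iUnion_compl_thickening_one_div] at hi
    obtain ⟨l, hl⟩ := mem_iUnion.mp hi
    exact mem_iUnion₂.mpr ⟨(m, l), a, hx, hl⟩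
  rw [hAP] at hA ⊢
  exact .iUnion hPc hPn hA

end Metric

theorem exists_pos_ball_subset_and_disjoint {X ι : Type*} [MetricSpace X] [Finite ι]
    {U : Set (Set X)} (hUo : ∀ u ∈ U, IsOpen u) (hUc : ⋃₀ U = univ) (z : ι → X) :
    ∃ ρ > 0, (∀ i, ∃ u ∈ U, ball (z i) ρ ⊆ u) ∧
      ∀ i j, z i ≠ z j → Disjoint (ball (z i) ρ) (ball (z j) ρ) := by
  have hsmall : ∀ i, ∀ᶠ ρ in 𝓝[>] (0 : ℝ), ∃ u ∈ U, ball (z i) ρ ⊆ u := fun i => by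
    obtain ⟨u, hu, hzu⟩ := hUc.symm ▸ mem_univ (z i)
    obtain ⟨ε, hε, hεu⟩ := Metric.isOpen_iff.mp (hUo u hu) _ hzu
    filter_upwards [eventually_nhdsWithin_of_eventually_nhds (eventually_lt_nhds hε)] with ρ hρ
    exact ⟨u, hu, (ball_subset_ball hρ.le).trans hεu⟩
  have hsep : ∀ q : ι × ι, ∀ᶠ ρ in 𝓝[>] (0 : ℝ),
      z q.1 ≠ z q.2 → Disjoint (ball (z q.1) ρ) (ball (z q.2) ρ) := fun q => by
    by_cases hq : z q.1 = z q.2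
    · exact Eventually.of_forall fun _ h => absurd hq h
    have : (0 : ℝ) < dist (z q.1) (z q.2) / 2 := half_pos (dist_pos.mpr hq)
    filter_upwards [eventually_nhdsWithin_of_eventually_nhds (eventually_lt_nhds this)]
      with ρ hρ _
    exact ball_disjoint_ball (by linarith)
  obtain ⟨ρ, ⟨hρU, hρsep⟩, hρ⟩ :=
    ((eventually_all.2 hsmall).and (eventually_all.2 hsep)).and self_mem_nhdsWithin |>.exists
  exact ⟨ρ, hρ, hρU, fun i j => hρsep (i, j)⟩

open MulAction

theorem MulAction.isClosed_fixedPoints {M X : Type*} [Monoid M] [MulAction M X]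
    [TopologicalSpace X] [T2Space X] [ContinuousConstSMul M X] :
    IsClosed (fixedPoints M X) := by
  have : fixedPoints M X = ⋂ m : M, {x | m • x = x} := by ext; simp [mem_fixedPoints]
  rw [this]
  exact isClosed_iInter fun m => isClosed_eq (continuous_const_smul m) continuous_id

theorem MulAction.card_stabilizer_lt_of_notMem_fixedPoints {G X : Type*} [Group G] [Finite G]
    [MulAction G X] {w : X} (hw : w ∉ fixedPoints G X) :
    Nat.card (stabilizer G w) < Nat.card G :=
  (Subgroup.card_le_card_group _).lt_of_ne fun h => hw fun g =>
    mem_stabilizer_iff.mp (Subgroup.eq_top_of_card_eq _ h ▸ Subgroup.mem_top g)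

instance Subgroup.isIsometricSMul {G X : Type*} [Group G] [MulAction G X]
    [PseudoEMetricSpace X] [IsIsometricSMul G X] (H : Subgroup G) : IsIsometricSMul H X :=
  ⟨fun h => isometry_smul X (h : G)⟩

/-- The orbit space `G\X`, as a type synonym of `orbitRel.Quotient G X` so that its metric
does not clash with the quotient topology on `Quotient`. -/
def OrbitSpace (G X : Type*) [Group G] [MulAction G X] : Type _ := orbitRel.Quotient G X

namespace OrbitSpace

variable {G X : Type*} [Group G] [MulAction G X]

variable (G) in
def mk (x : X) : OrbitSpace G X := Quotient.mk _ x

theorem mk_surjective : Function.Surjective (mk G : X → OrbitSpace G X) :=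
  Quotient.mk_surjective

@[simp]
theorem mk_smul (g : G) (x : X) : mk G (g • x) = mk G x :=
  Quotient.sound ⟨g, rfl⟩

theorem mk_eq_mk_iff {x y : X} : mk G x = mk G y ↔ ∃ g : G, g • y = x :=
  Quotient.eq''

def ofSubgroup (H : Subgroup G) : OrbitSpace H X → OrbitSpace G X :=
  Quotient.lift (mk G) fun _ _ ⟨h, hh⟩ => mk_eq_mk_iff.mpr ⟨h, hh⟩

theorem mk_preimage_mk_image_fixedPoints :
    mk G ⁻¹' (mk G '' fixedPoints G X) = fixedPoints G X := by
  refine subset_antisymm (fun x ⟨c, hc, hcx⟩ g => ?_) (subset_preimage_image _ _)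
  obtain ⟨h, rfl⟩ := mk_eq_mk_iff.mp hcx.symm
  rw [hc, hc]

variable [MetricSpace X]

theorem iInf_dist_smul_le [Finite G] (x y : X) (g : G) :
    ⨅ g : G, dist x (g • y) ≤ dist x (g • y) :=
  ciInf_le (Set.finite_range _).bddBelow g

theorem exists_dist_smul_eq_iInf [Finite G] (x y : X) :
    ∃ g : G, dist x (g • y) = ⨅ g : G, dist x (g • y) :=
  exists_eq_ciInf_of_finite

variable [IsIsometricSMul G X]

theorem iInf_dist_smul_smul (a b : G) (x y : X) :
    ⨅ g : G, dist (a • x) (g • b • y) = ⨅ g : G, dist x (g • y) := by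
  have : ∀ g : G, dist (a • x) (g • b • y) = dist x ((a⁻¹ * g * b) • y) := fun g => by
    rw [← dist_smul a x, mul_assoc, mul_smul, smul_inv_smul, mul_smul]
  have hs : Function.Surjective fun g : G => a⁻¹ * g * b := fun h => ⟨a * h * b⁻¹, by group⟩
  simp_rw [this]
  exact hs.iInf_comp fun g => dist x (g • y)

theorem iInf_dist_smul_comm (x y : X) :
    ⨅ g : G, dist x (g • y) = ⨅ g : G, dist y (g • x) := by
  have : ∀ g : G, dist x (g • y) = dist y (g⁻¹ • x) := fun g => by
    rw [dist_comm, ← dist_smul g⁻¹, inv_smul_smul]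
  simp_rw [this]
  exact inv_surjective.iInf_comp fun g => dist y (g • x)

variable [Finite G]

theorem iInf_dist_smul_triangle (x y z : X) :
    ⨅ g : G, dist x (g • z) ≤ (⨅ g : G, dist x (g • y)) + ⨅ g : G, dist y (g • z) := by
  obtain ⟨g, hg⟩ := exists_dist_smul_eq_iInf (G := G) x y
  obtain ⟨h, hh⟩ := exists_dist_smul_eq_iInf (G := G) y z
  calc ⨅ g : G, dist x (g • z) ≤ dist x ((g * h) • z) := iInf_dist_smul_le x z _
    _ ≤ dist x (g • y) + dist (g • y) (g • h • z) := by
        rw [mul_smul]; exact dist_triangle _ _ _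
    _ = _ := by rw [dist_smul, hg, hh]

noncomputable instance : MetricSpace (OrbitSpace G X) where
  dist := Quotient.lift₂ (fun x y => ⨅ g : G, dist x (g • y)) <| by
    rintro _ _ x y ⟨a, rfl⟩ ⟨b, rfl⟩
    exact iInf_dist_smul_smul a b x y
  dist_self := Quotient.ind fun x =>
    le_antisymm ((iInf_dist_smul_le x x 1).trans_eq (by simp))
      (Real.iInf_nonneg fun _ => dist_nonneg)
  dist_comm := Quotient.ind₂ iInf_dist_smul_comm
  dist_triangle := Quotient.ind fun x => Quotient.ind₂ fun y z => iInf_dist_smul_triangle x y z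
  eq_of_dist_eq_zero {a b} := Quotient.inductionOn₂ a b fun x y (h : ⨅ g : G, _ = 0) => by
    obtain ⟨g, hg⟩ := exists_dist_smul_eq_iInf (G := G) x y
    exact Quotient.sound ⟨g, (dist_eq_zero.mp (hg.trans h)).symm⟩

theorem exists_dist_mk_mk_eq (x y : X) : ∃ g : G, dist (mk G x) (mk G y) = dist x (g • y) := by
  obtain ⟨g, hg⟩ := exists_dist_smul_eq_iInf (G := G) x y
  exact ⟨g, hg.symm⟩

theorem dist_mk_mk_le (x y : X) (g : G) : dist (mk G x) (mk G y) ≤ dist x (g • y) :=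
  iInf_dist_smul_le x y g

theorem dist_mk_mk_le_dist (x y : X) : dist (mk G x) (mk G y) ≤ dist x y := by
  simpa using dist_mk_mk_le (G := G) x y 1

theorem dist_mk_mk_of_mem_fixedPoints (x : X) {y : X} (hy : y ∈ fixedPoints G X) :
    dist (mk G x) (mk G y) = dist x y := by
  obtain ⟨g, hg⟩ := exists_dist_mk_mk_eq (G := G) x y
  rw [hg, hy g]

theorem dist_mk_mk_eq_iInf_prod (x y : X) :
    dist (mk G x) (mk G y) = ⨅ p : G × G, dist (p.1 • x) (p.2 • y) := by
  have : ∀ p : G × G, dist (p.1 • x) (p.2 • y) = dist x ((p.1⁻¹ * p.2) • y) := fun p => by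
    rw [← dist_smul p.1⁻¹, inv_smul_smul, mul_smul]
  have hs : Function.Surjective fun p : G × G => p.1⁻¹ * p.2 := fun g => ⟨(1, g), by simp⟩
  simp_rw [this]
  exact (hs.iInf_comp fun g => dist x (g • y)).symm

theorem lipschitzWith_mk : LipschitzWith 1 (mk G : X → OrbitSpace G X) :=
  LipschitzWith.mk_one dist_mk_mk_le_dist

theorem mk_image_ball (x : X) (r : ℝ) : mk G '' ball x r = ball (mk G x) r := by
  refine subset_antisymm (image_subset_iff.mpr fun y hy => ?_) fun q hq => ?_
  · exact (dist_mk_mk_le_dist y x).trans_lt hy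
  · obtain ⟨y, rfl⟩ := mk_surjective q
    obtain ⟨g, hg⟩ := exists_dist_mk_mk_eq (G := G) x y
    refine ⟨g • y, ?_, mk_smul g y⟩
    rw [mem_ball', ← hg]
    exact mem_ball'.mp hq

theorem isOpenQuotientMap_mk : IsOpenQuotientMap (mk G : X → OrbitSpace G X) where
  surjective := mk_surjective
  continuous := lipschitzWith_mk.continuous
  isOpenMap s hs := Metric.isOpen_iff.mpr <| by
    rintro _ ⟨x, hx, rfl⟩
    obtain ⟨ε, hε, hεs⟩ := Metric.isOpen_iff.mp hs x hx
    exact ⟨ε, hε, mk_image_ball (G := G) x ε ▸ image_mono hεs⟩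

theorem dist_ofSubgroup_le (H : Subgroup G) (a b : OrbitSpace H X) :
    dist (ofSubgroup H a) (ofSubgroup H b) ≤ dist a b := by
  obtain ⟨x, rfl⟩ := mk_surjective a
  obtain ⟨y, rfl⟩ := mk_surjective b
  obtain ⟨h, hh⟩ := exists_dist_mk_mk_eq (G := H) x y
  rw [hh]
  exact dist_mk_mk_le x y (h : G)

theorem isClosed_mk_image_fixedPoints : IsClosed (mk G '' fixedPoints G X) := by
  rw [← isOpenQuotientMap_mk.isQuotientMap.isCoinducing.isClosed_preimage,
    mk_preimage_mk_image_fixedPoints]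
  exact isClosed_fixedPoints

theorem isometry_mk_restrict_fixedPoints :
    Isometry fun c : fixedPoints G X => mk G (c : X) :=
  Isometry.of_dist_eq fun c c' => dist_mk_mk_of_mem_fixedPoints (G := G) (c : X) c'.2

/-- Small balls about `w` meet their translates only under the stabilizer of `w`. -/
theorem exists_isometry_closedBall_stabilizer (w : X) :
    ∃ r > 0, Isometry ((closedBall (mk (stabilizer G w) w) r).domRestrict (ofSubgroup _)) ∧
      ofSubgroup _ '' closedBall (mk (stabilizer G w) w) r = closedBall (mk G w) r := by
  set H := stabilizer G w
  have hsmall : ∀ᶠ r in 𝓝[>] (0 : ℝ), ∀ g : G, g • w ≠ w → 4 * r < dist (g • w) w :=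
    eventually_all.2 fun g => by
      by_cases hg : g • w = w
      · exact Eventually.of_forall fun _ h => absurd hg h
      filter_upwards [eventually_nhdsWithin_of_eventually_nhds
        (eventually_lt_nhds (div_pos (dist_pos.mpr hg) four_pos))] with r hr _
      linarith
  obtain ⟨r, hr4, hr⟩ := (hsmall.and self_mem_nhdsWithin).exists
  have hcap : ∀ x y, dist x w ≤ r → dist y w ≤ r → ∀ g : G, dist x (g • y) ≤ 2 * r → g ∈ H := by
    intro x y hx hy g hxy
    by_contra hg
    have := hr4 g hg
    have := dist_triangle4 (g • w) (g • y) x w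
    rw [dist_smul, dist_comm (g • y)] at this
    linarith [dist_comm w y]
  have hdistH : ∀ x, dist (mk H x) (mk H w) = dist x w := fun x =>
    dist_mk_mk_of_mem_fixedPoints x fun h => h.2
  refine ⟨r, hr, Isometry.of_dist_eq fun ⟨a, ha⟩ ⟨b, hb⟩ => ?_, subset_antisymm ?_ ?_⟩
  · obtain ⟨x, rfl⟩ := mk_surjective a
    obtain ⟨y, rfl⟩ := mk_surjective b
    rw [mem_closedBall, hdistH] at ha hb
    refine le_antisymm (dist_ofSubgroup_le H (mk H x) (mk H y)) ?_
    obtain ⟨g, hg⟩ := exists_dist_mk_mk_eq (G := G) x y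
    have hgH : g ∈ H := hcap x y ha hb g <| by
      rw [← hg]
      linarith [dist_mk_mk_le_dist (G := G) x y, dist_triangle_right x y w]
    exact (dist_mk_mk_le x y (⟨g, hgH⟩ : H)).trans_eq hg.symm
  · rintro _ ⟨a, ha, rfl⟩
    exact (dist_ofSubgroup_le H a _).trans ha
  · intro q hq
    obtain ⟨x, rfl⟩ := mk_surjective q
    obtain ⟨g, hg⟩ := exists_dist_mk_mk_eq (G := G) x w
    refine ⟨mk H (g⁻¹ • x), ?_, mk_smul g⁻¹ x⟩
    rw [mem_closedBall, hdistH, ← dist_smul g, smul_inv_smul, ← hg]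
    exact hq

variable {n : ℕ}

theorem coverDimLE_mk_image_fixedPoints (hX : CoverDimLE X n) :
    CoverDimLE (mk G '' fixedPoints G X) n :=
  (hX.subtype isClosed_fixedPoints).of_homeomorph <|
    isometry_mk_restrict_fixedPoints.isometryEquivOnRange.toHomeomorph.trans
      (Homeomorph.setCongr (image_eq_range _ _).symm)

theorem exists_mem_nhds_coverDimOnLE_of_stabilizer {w : X}
    (h : CoverDimLE (OrbitSpace (stabilizer G w) X) n) :
    ∃ N ∈ 𝓝 (mk G w), CoverDimOnLE N n := by
  obtain ⟨r, hr, hf, himage⟩ := exists_isometry_closedBall_stabilizer (G := G) w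
  refine ⟨closedBall (mk G w) r, closedBall_mem_nhds _ hr,
    (coverDimOnLE_iff_coverDimLE_subtype _).2 ?_⟩
  exact (h.subtype isClosed_closedBall).of_homeomorph <|
    hf.isometryEquivOnRange.toHomeomorph.trans
      (Homeomorph.setCongr ((range_domRestrict _ _).trans himage))

end OrbitSpace

open OrbitSpace in
theorem CoverDimLE.of_orbitSpace {G X : Type*} [Group G] [MulAction G X] [MetricSpace X]
    [Finite G] [IsIsometricSMul G X] {n : ℕ} (h : CoverDimLE (OrbitSpace G X) n) :
    CoverDimLE X n := by
  refine h.of_pairwiseDisjoint_sheets lipschitzWith_mk.continuous fun U hUo hUc q => ?_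
  obtain ⟨z, rfl⟩ := mk_surjective q
  obtain ⟨ρ, hρ, hρU, hρsep⟩ := exists_pos_ball_subset_and_disjoint hUo hUc fun g : G => g • z
  refine ⟨ball (mk G z) ρ, isOpen_ball, mem_ball_self hρ, range fun g : G => ball (g • z) ρ,
    fun x hx => ?_, ?_, ?_⟩
  · obtain ⟨g, hg⟩ := exists_dist_mk_mk_eq (G := G) x z
    exact ⟨_, ⟨g, rfl⟩, mem_ball.mpr (hg ▸ mem_ball.mp hx)⟩
  · rintro _ ⟨g, rfl⟩ _ ⟨g', rfl⟩ hne
    exact hρsep g g' fun h => hne (congrArg (ball · ρ) h)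
  · rintro _ ⟨g, rfl⟩
    exact ⟨isOpen_ball, hρU g⟩

open OrbitSpace in
theorem CoverDimLE.orbitSpace {G : Type*} {X : Type u} [Group G] [MulAction G X]
    [MetricSpace X] [Finite G] [IsIsometricSMul G X] {n : ℕ} (hX : CoverDimLE X n) :
    CoverDimLE (OrbitSpace G X) n := by
  induction hk : Nat.card G using Nat.strong_induction_on generalizing G with
  | _ k ih =>
  set Fix := mk G '' fixedPoints G X
  have hFixc : IsClosed Fix := isClosed_mk_image_fixedPoints
  have hout : ∀ l : ℕ, CoverDimOnLE (thickening (1 / (l + 1)) Fix)ᶜ n := fun l =>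
    coverDimOnLE_of_forall_mem_nhds isOpen_thickening.isClosed_compl fun q hq => by
      obtain ⟨w, rfl⟩ := mk_surjective q
      have hw : w ∉ fixedPoints G X := fun hw =>
        hq (self_subset_thickening Nat.one_div_pos_of_nat _ ⟨w, hw, rfl⟩)
      exact exists_mem_nhds_coverDimOnLE_of_stabilizer
        (ih _ (hk ▸ card_stabilizer_lt_of_notMem_fixedPoints hw) rfl)
  have hcover :
      ⋃ o : Option ℕ, Option.elim' Fix (fun l : ℕ => (thickening (1 / (l + 1)) Fix)ᶜ) o = univ := by
    rw [iUnion_option, Option.elim'_none]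
    simp only [Option.elim'_some, hFixc.iUnion_compl_thickening_one_div, union_compl_self]
  rw [← coverDimOnLE_univ_iff, ← hcover]
  refine .iUnion ?_ ?_ (hcover ▸ isClosed_univ)
  · rintro (_ | l)
    exacts [hFixc, isOpen_thickening.isClosed_compl]
  · rintro (_ | l)
    exacts [(coverDimOnLE_iff_coverDimLE_subtype Fix).2 (coverDimLE_mk_image_fixedPoints hX),
      hout l]

/-- For a finite group acting by isometries on a metric space, the covering dimension of `Z`
equals the covering dimension of the quotient `F\Z` with the quotient metric. -/
theorem stmt_2 {Z : Type*} [MetricSpace Z] {F : Type*} [Group F] [Finite F]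
    [MulAction F Z] (hiso : ∀ g : F, Isometry fun z : Z => g • z) :
    ∃ m : MetricSpace (Quotient (MulAction.orbitRel F Z)),
      (∀ z z' : Z,
        m.dist (Quotient.mk (MulAction.orbitRel F Z) z) (Quotient.mk (MulAction.orbitRel F Z) z')
          = ⨅ p : F × F, dist (p.1 • z) (p.2 • z')) ∧
      ∀ n : ℕ, CoverDimLE Z n ↔
        @CoverDimLE (Quotient (MulAction.orbitRel F Z))
          m.toUniformSpace.toTopologicalSpace n := by
  have : IsIsometricSMul F Z := ⟨hiso⟩
  exact ⟨(inferInstance : MetricSpace (OrbitSpace F Z)), OrbitSpace.dist_mk_mk_eq_iInf_prod,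
    fun n => ⟨CoverDimLE.orbitSpace, CoverDimLE.of_orbitSpace⟩⟩
end

section
/- Let K be a simplicial complex of dimension n, and for j = 0,…,n let C^j be the collection of barycentric open stars Star_{bK}(σ̂) over j-simplices σ of K. Then for any C_0 ∈ C^j, the number of elements of C^0 ∪ … ∪ C^j meeting C_0 non-trivially is at most 2^{j+1} − 1. -/
open Set

/-- An abstract simplicial complex on a vertex type `V`. -/
structure AbsSimplicialComplex (V : Type*) where
  faces : Set (Finset V)
  nonempty_of_mem : ∀ σ ∈ faces, σ.Nonempty
  down_closed : ∀ σ ∈ faces, ∀ τ : Finset V, τ ⊆ σ → τ.Nonempty → τ ∈ faces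

/-- A point of the geometric realisation `|K|`, given by barycentric coordinates:
nonnegative, supported exactly on a face of `K`, and summing to `1`. -/
def IsRealizationPoint {V : Type*} (K : AbsSimplicialComplex V) (f : V → ℝ) : Prop :=
  (∀ v, 0 ≤ f v) ∧ ∃ σ ∈ K.faces, (Function.support f : Set V) = ↑σ ∧ ∑ v ∈ σ, f v = 1

/-- The open star `Star_{bK}(σ̂)` of the barycenter of `σ` in the barycentric
subdivision, described in barycentric coordinates on `|K| = |bK|`: a point lies in it
iff `σ` occurs among its level sets `{v : t ≤ f v}` for some `t > 0`. -/
def BaryStar {V : Type*} (σ : Finset V) : Set (V → ℝ) :=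
  {f | ∃ t : ℝ, 0 < t ∧ ∀ v : V, v ∈ σ ↔ t ≤ f v}

/-- For a `j`-simplex `σ` of `K`, at most `2^{j+1} - 1` barycentric stars of barycenters of
simplices of dimension `≤ j` meet the barycentric star of `σ̂`. -/
theorem stmt_7 {V : Type*} (K : AbsSimplicialComplex V) (j : ℕ)
    (σ : Finset V) (hσ : σ ∈ K.faces) (hcard : σ.card = j + 1) :
    {τ : Finset V | τ ∈ K.faces ∧ τ.card ≤ j + 1 ∧
        ∃ f : V → ℝ, IsRealizationPoint K f ∧ f ∈ BaryStar σ ∧ f ∈ BaryStar τ}.encard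
      ≤ ((2 ^ (j + 1) - 1 : ℕ) : ℕ∞) := by
  classical
  have hsub : {τ : Finset V | τ ∈ K.faces ∧ τ.card ≤ j + 1 ∧
        ∃ f : V → ℝ, IsRealizationPoint K f ∧ f ∈ BaryStar σ ∧ f ∈ BaryStar τ}
      ⊆ ↑(σ.powerset \ {∅}) := by
    rintro τ ⟨hτf, hτc, f, hf, ⟨t, ht, hσeq⟩, ⟨s, hs, hτeq⟩⟩
    have hne : τ.Nonempty := K.nonempty_of_mem τ hτf
    have hsubset : τ ⊆ σ := by
      rcases le_total t s with h | h
      · intro v hv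
        exact (hσeq v).2 (le_trans h ((hτeq v).1 hv))
      · have hστ : σ ⊆ τ := fun v hv => (hτeq v).2 (le_trans h ((hσeq v).1 hv))
        have : σ = τ := Finset.eq_of_subset_of_card_le hστ (by omega)
        exact this ▸ Finset.Subset.refl σ
    simp [Finset.mem_powerset, hsubset, Finset.nonempty_iff_ne_empty.mp hne]
  calc _ ≤ (↑(σ.powerset \ {∅}) : Set (Finset V)).encard := Set.encard_mono hsub
    _ = (((σ.powerset \ {∅}).card : ℕ) : ℕ∞) := Set.encard_coe_eq_coe_finsetCard _
    _ ≤ ((2 ^ (j + 1) - 1 : ℕ) : ℕ∞) := by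
        rw [Finset.card_sdiff_of_subset (by simp)]
        simp [Finset.card_powerset, hcard]
end

section
/- In the setting of the equivariant refinement construction (W = { π⁻¹(V) ∩ h·U_V : V ∈ V, h ∈ F } with U an F-cover), for every z ∈ Z the map sending a member W of W containing z to π(W) ∈ V is well-defined and injective into { V ∈ V : π(z) ∈ V }. Consequently dim(W) ≤ dim(V). -/
open Set Pointwise

/-- In the equivariant refinement construction `𝒲 = { π⁻¹(V) ∩ h • c V }`, for each `z ∈ Z`
the map sending a member of `𝒲` containing `z` to its image under `π` is a well-defined
injection into `{ V ∈ 𝒱 : π(z) ∈ V }`; consequently `dim 𝒲 ≤ dim 𝒱`. -/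
theorem stmt_12 {Z : Type*} [MetricSpace Z] {F : Type*} [Group F] [Finite F]
    [MulAction F Z] (hiso : ∀ g : F, Isometry fun z : Z => g • z)
    (𝒰 : Set (Set Z)) (hUopen : ∀ u ∈ 𝒰, IsOpen u) (hUcov : ⋃₀ 𝒰 = univ)
    (hUequi : ∀ g : F, ∀ u ∈ 𝒰, g • u ∈ 𝒰)
    (hUF : ∀ g : F, ∀ u ∈ 𝒰, (g • u ∩ u).Nonempty → g • u = u)
    (𝒱 : Set (Set (Quotient (MulAction.orbitRel F Z))))
    (hVopen : ∀ v ∈ 𝒱, IsOpen v) (hVcov : ⋃₀ 𝒱 = univ)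
    (c : Set (Quotient (MulAction.orbitRel F Z)) → Set Z)
    (hc : ∀ v ∈ 𝒱, c v ∈ 𝒰 ∧ v ⊆ Quotient.mk (MulAction.orbitRel F Z) '' c v) :
    let π : Z → Quotient (MulAction.orbitRel F Z) := Quotient.mk (MulAction.orbitRel F Z)
    let 𝒲 : Set (Set Z) := {w | ∃ v ∈ 𝒱, ∃ h : F, w = π ⁻¹' v ∩ h • c v}
    -- well-definedness: the image under `π` of each member built from `v` is `v` itself
    (∀ v ∈ 𝒱, ∀ h : F, π '' (π ⁻¹' v ∩ h • c v) = v) ∧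
    -- injectivity on the members containing a fixed point `z`
    (∀ z : Z, ∀ v ∈ 𝒱, ∀ v' ∈ 𝒱, ∀ h h' : F,
      z ∈ π ⁻¹' v ∩ h • c v → z ∈ π ⁻¹' v' ∩ h' • c v' → v = v' →
        π ⁻¹' v ∩ h • c v = π ⁻¹' v' ∩ h' • c v') ∧
    -- consequence: `dim 𝒲 ≤ dim 𝒱`
    (∀ n : ℕ, (∀ q, {v ∈ 𝒱 | q ∈ v}.encard ≤ n + 1) →
      ∀ z : Z, {w ∈ 𝒲 | z ∈ w}.encard ≤ n + 1) := by
  intro π 𝒲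
  have hπ : ∀ (g : F) (x : Z), π (g • x) = π x := by
    intro g x
    exact Quotient.sound ⟨g, rfl⟩
  have part1 : ∀ v ∈ 𝒱, ∀ h : F, π '' (π ⁻¹' v ∩ h • c v) = v := by
    intro v hv h
    apply subset_antisymm
    · rintro q ⟨x, ⟨hx1, _⟩, rfl⟩
      exact hx1
    · intro q hq
      obtain ⟨x, hx, hxq⟩ := (hc v hv).2 hq
      refine ⟨h • x, ⟨?_, Set.smul_mem_smul_set hx⟩, ?_⟩
      · show π (h • x) ∈ v
        rw [hπ]; exact (show π x = q from hxq) ▸ hq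
      · rw [hπ]; exact hxq
  have part2 : ∀ z : Z, ∀ v ∈ 𝒱, ∀ v' ∈ 𝒱, ∀ h h' : F,
      z ∈ π ⁻¹' v ∩ h • c v → z ∈ π ⁻¹' v' ∩ h' • c v' → v = v' →
        π ⁻¹' v ∩ h • c v = π ⁻¹' v' ∩ h' • c v' := by
    intro z v hv v' hv' h h' hz hz' hvv'
    subst hvv'
    obtain ⟨_, hz2⟩ := hz
    obtain ⟨_, hz2'⟩ := hz'
    have hne : ((h⁻¹ * h') • c v ∩ c v).Nonempty := by
      refine ⟨h⁻¹ • z, ?_, ?_⟩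
      · rw [← smul_smul]
        exact Set.smul_mem_smul_set hz2'
      · rwa [← Set.mem_smul_set_iff_inv_smul_mem]
    have := hUF (h⁻¹ * h') (c v) (hc v hv).1 hne
    have : h • (h⁻¹ * h') • c v = h • c v := by rw [this]
    rw [smul_smul, mul_inv_cancel_left] at this
    rw [this]
  refine ⟨part1, part2, ?_⟩
  intro n hdim z
  refine le_trans (Set.encard_le_encard_of_injOn (f := fun w => π '' w)
    (t := {v ∈ 𝒱 | π z ∈ v}) ?_ ?_) (hdim (π z))
  · rintro w ⟨⟨v, hv, h, rfl⟩, hzw⟩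
    show π '' (π ⁻¹' v ∩ h • c v) ∈ _
    rw [part1 v hv h]
    exact ⟨hv, hzw.1⟩
  · rintro w ⟨⟨v, hv, h, rfl⟩, hzw⟩ w' ⟨⟨v', hv', h', rfl⟩, hzw'⟩ heq
    have heq' : π '' (π ⁻¹' v ∩ h • c v) = π '' (π ⁻¹' v' ∩ h' • c v') := heq
    rw [part1 v hv h, part1 v' hv' h'] at heq'
    exact part2 z v hv v' hv' h h' hzw hzw' heq'
end

section
/- Let Z be a compact metric space of covering dimension n, F a finite group acting on Z by isometries, k ∈ ℕ, and U a finite F-equivariant collection of open subsets of Z such that any subcollection of more than k members has empty intersection of boundaries. Then for every δ > 0 there exists an open cover W of Z of dimension ≤ n such that: (a) every member of W has diameter < δ; (b) for each W ∈ W, the number of U ∈ U with W ⊄ U and U ∩ W ≠ ∅ is at most k; (c) W is F-equivariant (gW ∈ W for all g ∈ F, W ∈ W). -/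
open Set Pointwise

/-!
Induction on the subgroup `K ≤ F`, building a `K`-invariant cover of a closed `K`-invariant set
`A` one closed invariant piece at a time. Near the points that `K` almost fixes, the
`K`-invariant cores of the members of a fine cover of dimension `≤ n` of `Z` do the job. A point
`z` that `K` moves determines, by a gap in the finitely many displacements `dist (g • z) z`, a
proper subgroup `H` whose cosets move a tube around `z` to mutually far apart translates; the
induction hypothesis covers the tube `H`-invariantly and its translates carry this to `K`. A piece
is glued in by giving each of its members an equivariantly chosen parent in the current cover and
trimming every parent, near the piece, to the neighbourhoods of its children, so the order stays
`≤ n + 1`. Throughout, an equivariant Lebesgue number of the cover under construction keeps the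
gluing possible.
Finally, small sets meet at most `k` members of `𝒰` without lying in them, since near any point
only the members with that point on their frontier can do so.
-/

open Metric

namespace EquivariantCover

section Invariance

variable {F Z : Type*} [Group F] [MulAction F Z]

lemma smul_mem_of_smul_set_eq {g : F} {A : Set Z} (h : g • A = A) {x : Z} (hx : x ∈ A) :
    g • x ∈ A :=
  h ▸ smul_mem_smul_set hx

lemma smul_set_eq_of_forall_smul_mem {K : Subgroup F} {X : Set Z}
    (h : ∀ g ∈ K, ∀ x ∈ X, g • x ∈ X) {g : F} (hg : g ∈ K) : g • X = X :=
  (smul_set_subset_iff.2 (h g hg)).antisymm fun x hx =>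
    ⟨g⁻¹ • x, h _ (K.inv_mem hg) x hx, smul_inv_smul g x⟩

lemma smul_eq_smul_of_inv_mul_mem {H : Subgroup F} {N : Set Z} (hNH : ∀ h ∈ H, h • N = N)
    {g g' : F} (h : g'⁻¹ * g ∈ H) : g • N = g' • N := by
  conv_rhs => rw [← hNH _ h, smul_smul, mul_inv_cancel_left]

theorem exists_equivariant_choice {α β : Type*} [MulAction F α] [MulAction F β] [Nonempty β]
    (K : Subgroup F) {S : Set α} (hS : ∀ g ∈ K, ∀ a ∈ S, g • a ∈ S) (R : α → β → Prop)
    (hR : ∀ g ∈ K, ∀ a b, R a b → R (g • a) (g • b))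
    (hex : ∀ a ∈ S, ∃ b, R a b ∧ ∀ g ∈ K, g • a = a → g • b = b) :
    ∃ P : α → β, ∀ a ∈ S, R a (P a) ∧ ∀ g ∈ K, P (g • a) = g • P a := by
  classical
  let rep : α → α := fun a => (Quotient.mk (MulAction.orbitRel K α) a).out
  have rep_smul : ∀ g ∈ K, ∀ a, rep (g • a) = rep a := fun g hg a =>
    congrArg Quotient.out (Quotient.sound (MulAction.orbitRel_apply.2 ⟨⟨g, hg⟩, rfl⟩))
  have rep_mem : ∀ a, ∃ k ∈ K, rep a = k • a := fun a => by
    obtain ⟨⟨k, hk⟩, hka⟩ :=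
      MulAction.orbitRel_apply.1 (Quotient.mk_out (s := MulAction.orbitRel K α) a)
    exact ⟨k, hk, hka.symm⟩
  choose! b hbR hbfix using hex
  choose! k hkK hk using rep_mem
  have hrepS : ∀ a ∈ S, rep a ∈ S := fun a ha => hk a ▸ hS _ (hkK a) a ha
  -- the transported choice does not depend on the element carrying `a` to its representative
  have transport : ∀ a ∈ S, ∀ k' ∈ K, rep a = k' • a → k'⁻¹ • b (rep a) = (k a)⁻¹ • b (rep a) := by
    intro a ha k' hk' hrep
    have hfix : (k' * (k a)⁻¹) • b (rep a) = b (rep a) := by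
      refine hbfix _ (hrepS a ha) _ (K.mul_mem hk' (K.inv_mem (hkK a))) ?_
      rw [mul_smul, hk a, inv_smul_smul, ← hrep, ← hk a]
    conv_lhs => rw [← hfix, ← mul_smul, inv_mul_cancel_left]
  refine ⟨fun a => (k a)⁻¹ • b (rep a), fun a ha => ⟨?_, fun g hg => ?_⟩⟩
  · have := hR _ (K.inv_mem (hkK a)) _ _ (hbR _ (hrepS a ha))
    rwa [hk a, inv_smul_smul, ← hk a] at this
  · have hga : rep a = (k (g • a) * g) • a := by rw [mul_smul, ← hk, rep_smul g hg]
    simp only [rep_smul g hg, ← transport a ha _ (K.mul_mem (hkK _) hg) hga, mul_inv_rev,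
      mul_smul, smul_inv_smul]

def invariantCore (K : Subgroup F) (Y v : Set Z) : Set Z :=
  {z ∈ Y | ∀ g ∈ K, g • z ∈ v}

lemma invariantCore_subset {K : Subgroup F} {Y : Set Z} (v : Set Z) :
    invariantCore K Y v ⊆ v := fun z hz => by
  simpa using hz.2 1 K.one_mem

lemma smul_invariantCore {K : Subgroup F} {Y : Set Z} (hYK : ∀ g ∈ K, g • Y = Y) {g : F}
    (hg : g ∈ K) (v : Set Z) :
    g • invariantCore K Y v = invariantCore K Y v := by
  refine smul_set_eq_of_forall_smul_mem (fun g hg z hz => ?_) hg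
  refine ⟨smul_mem_of_smul_set_eq (hYK g hg) hz.1, fun k hk => ?_⟩
  rw [smul_smul]
  exact hz.2 _ (K.mul_mem hk hg)

end Invariance

section Isometric

variable {F Z : Type*} [Group F] [MetricSpace Z] [MulAction F Z] [IsIsometricSMul F Z]

lemma infEDist_smul_set (g : F) (x : Z) (s : Set Z) :
    infEDist x (g • s) = infEDist (g⁻¹ • x) s := by
  simpa using infEDist_smul g (g⁻¹ • x) s

lemma smul_thickening (g : F) (δ : ℝ) (s : Set Z) :
    g • thickening δ s = thickening δ (g • s) := by
  ext x
  simp only [mem_smul_set_iff_inv_smul_mem, thickening, mem_ofPred_eq, infEDist_smul_set]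

lemma dist_smul_self_inv (g : F) (x : Z) : dist (g⁻¹ • x) x = dist (g • x) x := by
  rw [← dist_smul g, smul_inv_smul, dist_comm]

end Isometric

section Families

variable {F Z : Type*} [Group F] [MetricSpace Z] [MulAction F Z]

def IsRelOpen (A w : Set Z) : Prop :=
  ∃ O, IsOpen O ∧ w = O ∩ A

lemma IsRelOpen.subset {A w : Set Z} (h : IsRelOpen A w) : w ⊆ A := by
  obtain ⟨O, -, rfl⟩ := h
  exact inter_subset_right

lemma IsRelOpen.isOpen {w : Set Z} (h : IsRelOpen univ w) : IsOpen w := by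
  obtain ⟨O, hO, rfl⟩ := h
  rwa [inter_univ]

lemma encard_le_of_subset_image {α β : Type*} {t : Set β} {s : Set α} (f : α → β)
    (h : t ⊆ f '' s) : t.encard ≤ s.encard :=
  (encard_le_encard h).trans (encard_image_le f s)

/-- An equivariant Lebesgue number `L` for the family `𝒲` on `A`. -/
structure IsAdaptedFamily (K : Subgroup F) (A : Set Z) (𝒲 : Set (Set Z)) (L : ℝ) : Prop where
  isRelOpen : ∀ w ∈ 𝒲, IsRelOpen A w
  smul_mem : ∀ g ∈ K, ∀ w ∈ 𝒲, g • w ∈ 𝒲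
  exists_mem : ∀ s ⊆ A, s.Nonempty → diam s < L →
    ∃ w ∈ 𝒲, (∀ g ∈ K, g • s = s → g • w = w) ∧ A ∩ thickening L s ⊆ w

structure IsPieceCover (K : Subgroup F) (n : ℕ) (B : Set Z) (ℳ : Set (Set Z)) (L q : ℝ) : Prop
    extends IsAdaptedFamily K B ℳ q where
  q_pos : 0 < q
  q_le : q ≤ L
  nonempty : ∀ m ∈ ℳ, m.Nonempty
  diam_lt : ∀ m ∈ ℳ, diam m < L
  encard_le : ∀ z ∈ B, {m ∈ ℳ | z ∈ m}.encard ≤ n + 1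

namespace IsAdaptedFamily

variable {K : Subgroup F} {A : Set Z} {𝒲 : Set (Set Z)} {L : ℝ}

lemma mono (h : IsAdaptedFamily K A 𝒲 L) {L' : ℝ} (hL' : L' ≤ L) : IsAdaptedFamily K A 𝒲 L' where
  isRelOpen := h.isRelOpen
  smul_mem := h.smul_mem
  exists_mem s hsA hs hsL' := by
    obtain ⟨w, hw, hfix, hsw⟩ := h.exists_mem s hsA hs (hsL'.trans_le hL')
    exact ⟨w, hw, hfix, (inter_subset_inter_right A (thickening_mono hL' s)).trans hsw⟩

lemma subset_sUnion (h : IsAdaptedFamily K A 𝒲 L) (hL : 0 < L) : A ⊆ ⋃₀ 𝒲 := fun z hz => by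
  obtain ⟨w, hw, -, hzw⟩ := h.exists_mem {z} (singleton_subset_iff.2 hz) (singleton_nonempty z)
    (by rwa [diam_singleton])
  exact ⟨w, hw, hzw ⟨hz, self_subset_thickening hL _ rfl⟩⟩

lemma sep_nonempty (h : IsAdaptedFamily K A 𝒲 L) (hL : 0 < L) :
    IsAdaptedFamily K A {w ∈ 𝒲 | w.Nonempty} L where
  isRelOpen w hw := h.isRelOpen w hw.1
  smul_mem g hg w hw := ⟨h.smul_mem g hg w hw.1, hw.2.smul_set⟩
  exists_mem s hsA hs hsL := by
    obtain ⟨w, hw, hfix, hsw⟩ := h.exists_mem s hsA hs hsL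
    obtain ⟨x, hx⟩ := hs
    exact ⟨w, ⟨hw, x, hsw ⟨hsA hx, self_subset_thickening hL s hx⟩⟩, hfix, hsw⟩

end IsAdaptedFamily

variable [IsIsometricSMul F Z]

lemma IsRelOpen.smul {A w : Set Z} (h : IsRelOpen A w) {g : F} (hg : g • A = A) :
    IsRelOpen A (g • w) := by
  obtain ⟨O, hO, rfl⟩ := h
  exact ⟨g • O, hO.smul g, by rw [smul_set_inter, hg]⟩

theorem isAdaptedFamily_diam_lt [CompactSpace Z] {K : Subgroup F} {A : Set Z}
    (hAK : ∀ g ∈ K, g • A = A) {ε : ℝ} (hε : 0 < ε) :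
    IsAdaptedFamily K A {w | IsRelOpen A w ∧ diam w < ε} (ε / 4) where
  isRelOpen w hw := hw.1
  smul_mem g hg w hw := ⟨hw.1.smul (hAK g hg), by rw [diam_smul]; exact hw.2⟩
  exists_mem s _ _ hs := by
    refine ⟨A ∩ thickening (ε / 4) s, ⟨⟨_, isOpen_thickening, inter_comm _ _⟩, ?_⟩,
      fun g hg hgs => by rw [smul_set_inter, hAK g hg, smul_thickening, hgs], subset_rfl⟩
    calc diam (A ∩ thickening (ε / 4) s) ≤ diam (thickening (ε / 4) s) :=
          diam_mono inter_subset_right isBounded_of_compactSpace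
      _ ≤ diam s + 2 * (ε / 4) := diam_thickening_le s (by positivity)
      _ < ε := by linarith

end Families

section Step

variable {F Z : Type*} [Group F] [MetricSpace Z] [MulAction F Z]

def extension (B m : Set Z) (δ : ℝ) : Set Z :=
  thickening δ m ∩ {x | infEDist x m < infEDist x (B \ m)}

lemma isOpen_extension (B m : Set Z) (δ : ℝ) : IsOpen (extension B m δ) :=
  isOpen_thickening.inter (isOpen_lt continuous_infEDist continuous_infEDist)

lemma extension_inter_eq {B m : Set Z} (hB : IsClosed B) (hm : IsRelOpen B m) {δ : ℝ}
    (hδ : 0 < δ) : extension B m δ ∩ B = m := by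
  apply subset_antisymm
  · rintro x ⟨⟨-, hxm⟩, hxB⟩
    by_contra hx
    rw [mem_ofPred_eq, infEDist_zero_of_mem (show x ∈ B \ m from ⟨hxB, hx⟩)] at hxm
    exact not_lt_zero hxm
  · intro x hx
    refine ⟨⟨self_subset_thickening hδ m hx, ?_⟩, hm.subset hx⟩
    obtain ⟨O, hO, rfl⟩ := hm
    have hclosed : IsClosed (B \ (O ∩ B)) := by
      rw [sdiff_inter_self_eq_sdiff]
      exact hB.sdiff hO
    rw [mem_ofPred_eq, infEDist_zero_of_mem hx, infEDist_pos_iff_notMem_closure,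
      hclosed.closure_eq]
    exact fun h => h.2 hx

lemma mem_extension_of_le_dist {B m : Set Z} {δ : ℝ} {x : Z} (hx : x ∈ thickening δ m)
    (hfar : ∀ b ∈ B \ m, δ ≤ dist x b) : x ∈ extension B m δ :=
  ⟨hx, lt_of_lt_of_le hx <| le_infEDist.2 fun b hb => by
    rw [edist_dist]
    exact ENNReal.ofReal_le_ofReal (hfar b hb)⟩

lemma smul_extension [IsIsometricSMul F Z] {g : F} {B : Set Z} (hB : g • B = B) (m : Set Z)
    (δ : ℝ) : g • extension B m δ = extension B (g • m) δ := by
  rw [extension, extension, smul_set_inter, smul_thickening]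
  congr 1
  ext x
  conv_rhs => rw [← hB, ← smul_set_sdiff]
  simp only [mem_smul_set_iff_inv_smul_mem, mem_ofPred_eq, infEDist_smul_set]

def shrink (B : Set Z) (ℳ : Set (Set Z)) (P : Set Z → Set Z) (δ : ℝ) (w : Set Z) : Set Z :=
  w \ B ∪ ⋃ m ∈ {m ∈ ℳ | P m = w}, extension B m δ ∩ w

variable {B : Set Z} {ℳ : Set (Set Z)} {P : Set Z → Set Z} {δ : ℝ}

lemma mem_shrink {w : Set Z} {x : Z} :
    x ∈ shrink B ℳ P δ w ↔
      (x ∈ w ∧ x ∉ B) ∨ ∃ m ∈ ℳ, P m = w ∧ x ∈ extension B m δ ∧ x ∈ w := by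
  simp only [shrink, mem_union, mem_sdiff, mem_iUnion, mem_inter_iff, mem_ofPred_eq, exists_prop,
    and_assoc]

lemma shrink_subset (w : Set Z) : shrink B ℳ P δ w ⊆ w := fun _ hx => by
  rcases mem_shrink.1 hx with h | ⟨_, _, _, _, h⟩
  exacts [h.1, h]

lemma IsRelOpen.shrink {A w : Set Z} (hw : IsRelOpen A w) (hB : IsClosed B) :
    IsRelOpen A (shrink B ℳ P δ w) := by
  obtain ⟨O, hO, rfl⟩ := hw
  refine ⟨O ∩ Bᶜ ∪ ⋃ m ∈ {m ∈ ℳ | P m = O ∩ A}, extension B m δ ∩ O,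
    (hO.inter hB.isOpen_compl).union (isOpen_biUnion fun m _ => (isOpen_extension B m δ).inter hO),
    ?_⟩
  ext x
  simp only [mem_shrink, mem_inter_iff, mem_union, mem_compl_iff, mem_iUnion, mem_ofPred_eq,
    exists_prop]
  tauto

lemma smul_shrink [IsIsometricSMul F Z] {K : Subgroup F} (hBK : ∀ g ∈ K, g • B = B)
    (hℳK : ∀ g ∈ K, ∀ m ∈ ℳ, g • m ∈ ℳ) (hPK : ∀ g ∈ K, ∀ m ∈ ℳ, P (g • m) = g • P m)
    {g : F} (hg : g ∈ K) (w : Set Z) : g • shrink B ℳ P δ w = shrink B ℳ P δ (g • w) := by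
  have key : ∀ g ∈ K, ∀ w, g • shrink B ℳ P δ w ⊆ shrink B ℳ P δ (g • w) := by
    rintro g hg w _ ⟨x, hx, rfl⟩
    rcases mem_shrink.1 hx with ⟨hxw, hxB⟩ | ⟨m, hm, rfl, hxm, hxw⟩
    · refine mem_shrink.2 (Or.inl ⟨smul_mem_smul_set hxw, fun h => hxB ?_⟩)
      simpa using smul_mem_of_smul_set_eq (hBK _ (K.inv_mem hg)) h
    · refine mem_shrink.2 (Or.inr ⟨g • m, hℳK g hg m hm, hPK g hg m hm, ?_, smul_mem_smul_set hxw⟩)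
      rw [← smul_extension (hBK g hg)]
      exact smul_mem_smul_set hxm
  refine (key g hg w).antisymm ?_
  calc shrink B ℳ P δ (g • w) = g • g⁻¹ • shrink B ℳ P δ (g • w) := (smul_inv_smul g _).symm
    _ ⊆ g • shrink B ℳ P δ (g⁻¹ • g • w) := smul_set_mono (key _ (K.inv_mem hg) _)
    _ = g • shrink B ℳ P δ w := by rw [inv_smul_smul]

structure IsParentMap (K : Subgroup F) (A : Set Z) (𝒲 ℳ : Set (Set Z)) (L : ℝ)
    (P : Set Z → Set Z) : Prop where
  mem : ∀ m ∈ ℳ, P m ∈ 𝒲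
  subset : ∀ m ∈ ℳ, A ∩ thickening L m ⊆ P m
  smul : ∀ g ∈ K, ∀ m ∈ ℳ, P (g • m) = g • P m

variable [IsIsometricSMul F Z] {K : Subgroup F} {A : Set Z} {𝒲 : Set (Set Z)}
  {n : ℕ} {L q : ℝ}

theorem exists_isParentMap (hAK : ∀ g ∈ K, g • A = A) (h𝒲 : IsAdaptedFamily K A 𝒲 L)
    (hℳ : IsPieceCover K n B ℳ L q) (hBA : B ⊆ A) : ∃ P, IsParentMap K A 𝒲 ℳ L P := by
  obtain ⟨P, hP⟩ := exists_equivariant_choice K hℳ.smul_mem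
    (fun m w => w ∈ 𝒲 ∧ A ∩ thickening L m ⊆ w)
    (fun g hg m w ⟨hw, hmw⟩ => ⟨h𝒲.smul_mem g hg w hw, by
      rw [← hAK g hg, ← smul_thickening, ← smul_set_inter]
      exact smul_set_mono hmw⟩)
    (fun m hm => by
      obtain ⟨w, hw, hfix, hmw⟩ := h𝒲.exists_mem m ((hℳ.isRelOpen m hm).subset.trans hBA)
        (hℳ.nonempty m hm) (hℳ.diam_lt m hm)
      exact ⟨w, ⟨hw, hmw⟩, hfix⟩)
  exact ⟨P, fun m hm => (hP m hm).1.1, fun m hm => (hP m hm).1.2, fun g hg m hm => (hP m hm).2 g hg⟩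

lemma exists_shrink_of_near [CompactSpace Z] (hBK : ∀ g ∈ K, g • B = B)
    (hℳ : IsPieceCover K n B ℳ L q) (hP : IsParentMap K A 𝒲 ℳ L P) {s : Set Z}
    (hsd : diam s < q / 32) {x₀ a : Z} (hx₀ : x₀ ∈ s) (ha : a ∈ B) (hx₀a : dist x₀ a < q / 16) :
    ∃ w ∈ shrink B ℳ P (q / 4) '' 𝒲, (∀ g ∈ K, g • s = s → g • w = w) ∧
      A ∩ thickening (q / 32) s ⊆ w := by
  have hq := hℳ.q_pos
  set t := B ∩ thickening (q / 8) s
  have hat : a ∈ t := ⟨ha, mem_thickening_iff.2 ⟨x₀, hx₀, by rw [dist_comm]; linarith⟩⟩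
  have htd : diam t < q := calc
    diam t ≤ diam (thickening (q / 8) s) := diam_mono inter_subset_right isBounded_of_compactSpace
    _ ≤ diam s + 2 * (q / 8) := diam_thickening_le s (by positivity)
    _ < q := by linarith
  obtain ⟨m, hm, hmfix, htm⟩ := hℳ.exists_mem t inter_subset_left ⟨a, hat⟩ htd
  have ham : a ∈ m := htm ⟨ha, self_subset_thickening hq t hat⟩
  refine ⟨shrink B ℳ P (q / 4) (P m), mem_image_of_mem _ (hP.mem m hm), fun g hg hgs => ?_, ?_⟩
  · have hgt : g • t = t := by rw [smul_set_inter, hBK g hg, smul_thickening, hgs]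
    rw [smul_shrink hBK hℳ.smul_mem hP.smul hg, ← hP.smul g hg m hm, hmfix g hg hgt]
  rintro x ⟨hxA, hxs⟩
  obtain ⟨y, hy, hxy⟩ := mem_thickening_iff.1 hxs
  have hxa : dist x a < q / 8 := by
    linarith [dist_triangle4 x y x₀ a, dist_le_diam_of_mem isBounded_of_compactSpace hy hx₀]
  have hxm : x ∈ thickening (q / 4) m := mem_thickening_iff.2 ⟨a, ham, by linarith⟩
  refine mem_shrink.2 (Or.inr ⟨m, hm, rfl, mem_extension_of_le_dist hxm fun b ⟨hbB, hbm⟩ => ?_,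
    hP.subset m hm ⟨hxA, mem_thickening_iff.2 ⟨a, ham, by linarith [hℳ.q_le]⟩⟩⟩)
  -- `b` lies outside `m ⊇ B ∩ thickening q t`, hence at distance at least `q` from `a ∈ t`
  have hba : q ≤ dist b a := not_lt.1 fun h => hbm (htm ⟨hbB, mem_thickening_iff.2 ⟨a, hat, h⟩⟩)
  linarith [dist_triangle b x a, dist_comm x b]

lemma exists_shrink_of_far (h𝒲 : IsAdaptedFamily K A 𝒲 L) (hBK : ∀ g ∈ K, g • B = B)
    (hℳ : IsPieceCover K n B ℳ L q) (hP : IsParentMap K A 𝒲 ℳ L P) {s : Set Z} (hsA : s ⊆ A)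
    (hs : s.Nonempty) (hsd : diam s < q / 32) (hfar : ∀ x ∈ s, ∀ a ∈ B, q / 16 ≤ dist x a) :
    ∃ w ∈ shrink B ℳ P (q / 4) '' 𝒲, (∀ g ∈ K, g • s = s → g • w = w) ∧
      A ∩ thickening (q / 32) s ⊆ w := by
  have hqL : q / 32 ≤ L := by linarith [hℳ.q_le, hℳ.q_pos]
  obtain ⟨w, hw, hwfix, hsw⟩ := h𝒲.exists_mem s hsA hs (hsd.trans_le hqL)
  refine ⟨shrink B ℳ P (q / 4) w, mem_image_of_mem _ hw, fun g hg hgs => ?_, ?_⟩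
  · rw [smul_shrink hBK hℳ.smul_mem hP.smul hg, hwfix g hg hgs]
  rintro x ⟨hxA, hxs⟩
  refine mem_shrink.2 (Or.inl ⟨hsw ⟨hxA, thickening_mono hqL s hxs⟩, fun hxB => ?_⟩)
  obtain ⟨y, hy, hxy⟩ := mem_thickening_iff.1 hxs
  linarith [hfar y hy x hxB, dist_comm x y, hℳ.q_pos]

theorem exists_refinement_step [CompactSpace Z] (hAK : ∀ g ∈ K, g • A = A)
    (h𝒲 : IsAdaptedFamily K A 𝒲 L) {T : Set Z}
    (hT : ∀ z ∈ T, {w ∈ 𝒲 | z ∈ w}.encard ≤ n + 1) (hB : IsClosed B) (hBA : B ⊆ A)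
    (hBK : ∀ g ∈ K, g • B = B) (hℳ : IsPieceCover K n B ℳ L q) :
    ∃ 𝒲' : Set (Set Z), IsAdaptedFamily K A 𝒲' (q / 32) ∧ (∀ w' ∈ 𝒲', ∃ w ∈ 𝒲, w' ⊆ w) ∧
      ∀ z ∈ T ∪ B, {w ∈ 𝒲' | z ∈ w}.encard ≤ n + 1 := by
  obtain ⟨P, hP⟩ := exists_isParentMap hAK h𝒲 hℳ hBA
  have hq : 0 < q / 4 := by linarith [hℳ.q_pos]
  refine ⟨shrink B ℳ P (q / 4) '' 𝒲, ⟨?_, ?_, fun s hsA hs hsd => ?_⟩, ?_, ?_⟩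
  · rintro _ ⟨w, hw, rfl⟩
    exact (h𝒲.isRelOpen w hw).shrink hB
  · rintro g hg _ ⟨w, hw, rfl⟩
    exact ⟨g • w, h𝒲.smul_mem g hg w hw, (smul_shrink hBK hℳ.smul_mem hP.smul hg w).symm⟩
  · by_cases hnear : ∃ x ∈ s, ∃ a ∈ B, dist x a < q / 16
    · obtain ⟨x₀, hx₀, a, ha, hx₀a⟩ := hnear
      exact exists_shrink_of_near hBK hℳ hP hsd hx₀ ha hx₀a
    · push Not at hnear
      exact exists_shrink_of_far h𝒲 hBK hℳ hP hsA hs hsd hnear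
  · rintro _ ⟨w, hw, rfl⟩
    exact ⟨w, hw, shrink_subset w⟩
  intro z hz
  by_cases hzB : z ∈ B
  · refine (encard_le_of_subset_image (fun m => shrink B ℳ P (q / 4) (P m)) ?_).trans
      (hℳ.encard_le z hzB)
    rintro _ ⟨⟨w, hw, rfl⟩, hzw⟩
    rcases mem_shrink.1 hzw with ⟨-, h⟩ | ⟨m, hm, rfl, hzm, -⟩
    · exact absurd hzB h
    · refine ⟨m, ⟨hm, ?_⟩, rfl⟩
      rw [← extension_inter_eq hB (hℳ.isRelOpen m hm) hq]
      exact ⟨hzm, hzB⟩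
  · refine (encard_le_of_subset_image (shrink B ℳ P (q / 4)) ?_).trans (hT z (hz.resolve_right hzB))
    rintro _ ⟨⟨w, hw, rfl⟩, hzw⟩
    exact ⟨w, ⟨hw, shrink_subset w hzw⟩, rfl⟩

end Step

section NearlyFixed

variable {F Z : Type*} [Group F] [MetricSpace Z] [MulAction F Z]

def nearlyFixed (K : Subgroup F) (A : Set Z) (ε : ℝ) : Set Z :=
  {z ∈ A | ∀ g ∈ K, dist (g • z) z ≤ ε}

variable {K : Subgroup F} {A : Set Z}

lemma nearlyFixed_subset (ε : ℝ) : nearlyFixed K A ε ⊆ A := sep_subset A _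

variable [IsIsometricSMul F Z]

lemma isRelOpen_invariantCore [Finite F] {Y v : Set Z} (hv : IsOpen v) :
    IsRelOpen Y (invariantCore K Y v) := by
  refine ⟨⋂ g ∈ K, (g • ·) ⁻¹' v, (toFinite _).isOpen_biInter fun g _ =>
    hv.preimage (continuous_const_smul g), ?_⟩
  ext z
  simp only [invariantCore, mem_inter_iff, mem_iInter, mem_preimage, mem_ofPred_eq]
  tauto

lemma isClosed_nearlyFixed (hA : IsClosed A) (ε : ℝ) : IsClosed (nearlyFixed K A ε) := by
  have : nearlyFixed K A ε = A ∩ ⋂ g ∈ K, {z | dist (g • z) z ≤ ε} := by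
    ext z
    simp [nearlyFixed]
  rw [this]
  exact hA.inter <| isClosed_biInter fun g _ =>
    isClosed_le ((continuous_const_smul g).dist continuous_id) continuous_const

lemma smul_nearlyFixed (hAK : ∀ g ∈ K, g • A = A) {ε : ℝ} {g : F} (hg : g ∈ K) :
    g • nearlyFixed K A ε = nearlyFixed K A ε := by
  refine smul_set_eq_of_forall_smul_mem (fun g hg z hz => ?_) hg
  obtain ⟨hzA, hz⟩ := hz
  refine ⟨smul_mem_of_smul_set_eq (hAK g hg) hzA, fun k hk => ?_⟩
  rw [← dist_smul g⁻¹, inv_smul_smul, smul_smul, smul_smul]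
  exact hz _ (K.mul_mem (K.mul_mem (K.inv_mem hg) hk) hg)

/-- The pieces are the invariant cores of the members of a fine cover of `Z` of order `≤ n + 1`,
relative to the points that `K` moves by less than a quarter of its Lebesgue number. -/
theorem exists_isPieceCover_nearlyFixed [CompactSpace Z] [Finite F] {n : ℕ}
    (hdim : CoverDimLE Z n) (K : Subgroup F) {A : Set Z} (hAK : ∀ g ∈ K, g • A = A) {L : ℝ}
    (hL : 0 < L) : ∃ ε > 0, ∃ ℳ q, IsPieceCover K n (nearlyFixed K A ε) ℳ L q := by
  obtain ⟨V, hVopen, hVcover, hVsub, hVord⟩ := hdim {b | ∃ x, b = ball x (L / 3)}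
    (by rintro _ ⟨x, rfl⟩; exact isOpen_ball)
    (eq_univ_of_forall fun z => ⟨ball z (L / 3), ⟨z, rfl⟩, mem_ball_self (by positivity)⟩)
  obtain ⟨ρ, hρ, hleb⟩ := lebesgue_number_lemma_of_metric isCompact_univ
    (c := fun v : V => (v : Set Z)) (fun v => hVopen v v.2) (by rw [← sUnion_eq_iUnion, hVcover])
  set Y := nearlyFixed K A (ρ / 4)
  have hYK (g : F) (hg : g ∈ K) : g • Y = Y := smul_nearlyFixed hAK hg
  have mem_core {v : Set Z} {x₀ : Z} (hv : ball x₀ ρ ⊆ v) {x : Z} (hx : x ∈ Y)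
      (hxx₀ : dist x x₀ < ρ / 2) : x ∈ invariantCore K Y v :=
    ⟨hx, fun g hg => hv <| mem_ball.2 (by linarith [hx.2 g hg, dist_triangle (g • x) x x₀])⟩
  refine ⟨ρ / 4, by positivity, invariantCore K Y '' {v ∈ V | (invariantCore K Y v).Nonempty},
    min (ρ / 8) L, ⟨⟨?_, ?_, fun s hsY hs hsd => ?_⟩, lt_min (by positivity) hL, min_le_right _ _,
    ?_, ?_, ?_⟩⟩
  · rintro _ ⟨v, ⟨hv, -⟩, rfl⟩
    exact isRelOpen_invariantCore (hVopen v hv)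
  · rintro g hg _ ⟨v, hv, rfl⟩
    exact ⟨v, hv, (smul_invariantCore hYK hg v).symm⟩
  · obtain ⟨x₀, hx₀⟩ := hs
    obtain ⟨⟨v, hv⟩, hx₀v⟩ := hleb x₀ (mem_univ x₀)
    refine ⟨invariantCore K Y v,
      ⟨v, ⟨hv, x₀, mem_core hx₀v (hsY hx₀) (by simpa using half_pos hρ)⟩, rfl⟩,
      fun g hg _ => smul_invariantCore hYK hg v, fun x ⟨hxY, hxs⟩ => mem_core hx₀v hxY ?_⟩
    obtain ⟨y, hy, hxy⟩ := mem_thickening_iff.1 hxs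
    have := min_le_left (ρ / 8) L
    linarith [dist_triangle x y x₀, dist_le_diam_of_mem isBounded_of_compactSpace hy hx₀]
  · rintro _ ⟨v, ⟨-, hv⟩, rfl⟩
    exact hv
  · rintro _ ⟨v, ⟨hv, -⟩, rfl⟩
    obtain ⟨_, ⟨x, rfl⟩, hvx⟩ := hVsub v hv
    calc diam (invariantCore K Y v) ≤ diam (ball x (L / 3)) :=
          diam_mono ((invariantCore_subset v).trans hvx) isBounded_of_compactSpace
      _ ≤ 2 * (L / 3) := diam_ball (by positivity)
      _ < L := by linarith
  · intro z _
    refine (encard_le_of_subset_image (invariantCore K Y) ?_).trans (hVord z)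
    rintro _ ⟨⟨v, ⟨hv, -⟩, rfl⟩, hz⟩
    exact ⟨v, ⟨hv, invariantCore_subset v hz⟩, rfl⟩

end NearlyFixed

section Displacement

lemma exists_gap (D : Finset ℝ) {σ : ℝ} (hσ : 0 < σ) :
    ∃ r, 0 < r ∧ r ≤ σ / 2 ∧ ∀ d ∈ D, d ∉ Ioc r (2 * r) := by
  classical
  induction D using Finset.strongInduction generalizing σ with
  | H D ih =>
  by_cases h : ∃ d ∈ D, d ∈ Ioc (σ / 2) σ
  · obtain ⟨d, hd, hdσ⟩ := h
    obtain ⟨r, hr, hrσ, hgap⟩ := ih (D.filter (· ≤ σ / 2))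
      (Finset.filter_ssubset.2 ⟨d, hd, not_le.2 hdσ.1⟩) (half_pos hσ)
    exact ⟨r, hr, by linarith, fun d hd hdr =>
      hgap d (Finset.mem_filter.2 ⟨hd, by linarith [hdr.2]⟩) hdr⟩
  · push Not at h
    exact ⟨σ / 2, half_pos hσ, le_rfl, by rwa [mul_div_cancel₀ _ two_ne_zero]⟩

variable {F Z : Type*} [Group F] [MetricSpace Z] [MulAction F Z] [IsIsometricSMul F Z]

/-- The elements of `K` moving `z` by at most `r` form a subgroup once no displacement falls in
`(r, 2r]`; since `K` is finite, such a gap below any given displacement exists. -/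
theorem exists_lt_subgroup_of_displacement [Finite F] (K : Subgroup F) (z : Z) {σ : ℝ}
    (hσ : 0 < σ) (hmove : ∃ g ∈ K, σ ≤ dist (g • z) z) :
    ∃ H < K, ∃ r > 0, ∀ g ∈ K, g ∉ H → 2 * r < dist (g • z) z := by
  classical
  have := Fintype.ofFinite F
  obtain ⟨r, hr, hrσ, hgap⟩ := exists_gap (Finset.univ.image fun g : F => dist (g • z) z) hσ
  have hgap' (g : F) : dist (g • z) z ≤ r ∨ 2 * r < dist (g • z) z := by
    have := hgap _ (Finset.mem_image_of_mem _ (Finset.mem_univ g))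
    rwa [mem_Ioc, not_and_or, not_lt, not_le] at this
  let H : Subgroup F :=
    { carrier := {g | g ∈ K ∧ dist (g • z) z ≤ r}
      mul_mem' := fun {a b} ⟨ha, had⟩ ⟨hb, hbd⟩ => ⟨K.mul_mem ha hb, (hgap' (a * b)).resolve_right
        fun h => by
          have : dist ((a * b) • z) (a • z) = dist (b • z) z := by rw [mul_smul, dist_smul]
          linarith [dist_triangle ((a * b) • z) (a • z) z]⟩
      one_mem' := ⟨K.one_mem, by simpa using hr.le⟩
      inv_mem' := fun {g} ⟨hg, hgd⟩ => ⟨K.inv_mem hg, by rwa [dist_smul_self_inv]⟩ }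
  obtain ⟨g, hg, hgσ⟩ := hmove
  refine ⟨H, SetLike.lt_iff_le_and_exists.2 ⟨fun g hg => hg.1, g, hg, fun h => ?_⟩, r, hr,
    fun g hg hgH => (hgap' g).resolve_left fun h => hgH ⟨hg, h⟩⟩
  linarith [h.2]

end Displacement

section Induction

variable {F Z : Type*} [Group F] [MetricSpace Z] [MulAction F Z]
  {K H : Subgroup F} {A N : Set Z} {z₀ : Z} {r ρ : ℝ}

def tube (H : Subgroup F) (A : Set Z) (z₀ : Z) (r : ℝ) : Set Z :=
  A ∩ ⋃ h ∈ (H : Set F), closedBall (h • z₀) r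

lemma isClosed_tube [Finite F] (hA : IsClosed A) : IsClosed (tube H A z₀ r) :=
  hA.inter ((toFinite _).isClosed_biUnion fun _ _ => isClosed_closedBall)

def TranslatesSeparated (K H : Subgroup F) (N : Set Z) (ρ : ℝ) : Prop :=
  ∀ g ∈ K, g ∉ H → ∀ x ∈ N, ∀ y ∈ N, ρ ≤ dist x (g • y)

variable [IsIsometricSMul F Z]

lemma TranslatesSeparated.inv_mul_mem (hsep : TranslatesSeparated K H N ρ) {g g' : F}
    (hg : g ∈ K) (hg' : g' ∈ K) {x y : Z} (hx : x ∈ g • N) (hy : y ∈ g' • N)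
    (hxy : dist x y < ρ) : g'⁻¹ * g ∈ H := by
  by_contra h
  obtain ⟨x, hx, rfl⟩ := hx
  obtain ⟨y, hy, rfl⟩ := hy
  have := hsep _ (K.mul_mem (K.inv_mem hg') hg) h y hy x hx
  rw [← dist_smul g', mul_smul, smul_inv_smul, dist_comm] at this
  linarith

lemma TranslatesSeparated.mem_smul (hsep : TranslatesSeparated K H N ρ)
    (hNH : ∀ h ∈ H, h • N = N) {g g' : F} (hg : g ∈ K) (hg' : g' ∈ K) {x y : Z} (hx : x ∈ g • N)
    (hy : y ∈ g' • N) (hxy : dist x y < ρ) : x ∈ g' • N :=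
  smul_eq_smul_of_inv_mul_mem hNH (hsep.inv_mul_mem hg hg' hx hy hxy) ▸ hx

lemma TranslatesSeparated.isRelOpen_smul [Finite F] (hsep : TranslatesSeparated K H N ρ)
    (hρ : 0 < ρ) (hN : IsClosed N) (hNH : ∀ h ∈ H, h • N = N) {g : F} (hg : g ∈ K) {v : Set Z}
    (hv : IsRelOpen N v) : IsRelOpen (⋃ g ∈ K, g • N) (g • v) := by
  obtain ⟨O, hO, rfl⟩ := hv
  set E := ⋃ g' ∈ {g' ∈ K | g'⁻¹ * g ∉ H}, g' • N
  have hE : IsClosed E := (toFinite _).isClosed_biUnion fun g' _ => hN.smul g'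
  refine ⟨g • O ∩ Eᶜ, (hO.smul g).inter hE.isOpen_compl, subset_antisymm ?_ ?_⟩
  · rintro _ ⟨x, ⟨hxO, hxN⟩, rfl⟩
    refine ⟨⟨smul_mem_smul_set hxO, ?_⟩, mem_iUnion₂.2 ⟨g, hg, smul_mem_smul_set hxN⟩⟩
    simp only [E, mem_compl_iff, mem_iUnion, not_exists]
    exact fun g' ⟨hg', hH⟩ hx => hH (hsep.inv_mul_mem hg hg' (smul_mem_smul_set hxN) hx
      (by rwa [dist_self]))
  · rintro x ⟨⟨hxO, hxE⟩, hxKN⟩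
    obtain ⟨g', hg', hxg'⟩ := mem_iUnion₂.1 hxKN
    have hH : g'⁻¹ * g ∈ H := by
      by_contra hH
      exact hxE (mem_iUnion₂.2 ⟨g', ⟨hg', hH⟩, hxg'⟩)
    rw [← smul_eq_smul_of_inv_mul_mem hNH hH] at hxg'
    rw [smul_set_inter]
    exact ⟨hxO, hxg'⟩

lemma TranslatesSeparated.exists_mem [CompactSpace Z] (hsep : TranslatesSeparated K H N ρ)
    (hρ : 0 < ρ) (hNH : ∀ h ∈ H, h • N = N) {𝒱 : Set (Set Z)} {q : ℝ} (h𝒱 : IsAdaptedFamily H N 𝒱 q)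
    {t : Set Z} (htKN : t ⊆ ⋃ g ∈ K, g • N) (ht : t.Nonempty) (htd : diam t < min q ρ) :
    ∃ m ∈ {m | ∃ g ∈ K, ∃ v ∈ 𝒱, m = g • v},
      (∀ g ∈ K, g • t = t → g • m = m) ∧ (⋃ g ∈ K, g • N) ∩ thickening (min q ρ) t ⊆ m := by
  obtain ⟨x₀, hx₀⟩ := ht
  obtain ⟨g₀, hg₀, hx₀g₀⟩ := mem_iUnion₂.1 (htKN hx₀)
  -- everything within `ρ` of `t` lies in the single translate `g₀ • N`
  have near {x y : Z} (hx : x ∈ ⋃ g ∈ K, g • N) (hy : y ∈ g₀ • N) (hxy : dist x y < ρ) :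
      x ∈ g₀ • N := by
    obtain ⟨g, hg, hxg⟩ := mem_iUnion₂.1 hx
    exact hsep.mem_smul hNH hg hg₀ hxg hy hxy
  have htg₀ : t ⊆ g₀ • N := fun y hy => near (htKN hy) hx₀g₀
    ((dist_le_diam_of_mem isBounded_of_compactSpace hy hx₀).trans_lt
      (htd.trans_le (min_le_right _ _)))
  have hconj : ∀ k ∈ K, k • t = t → g₀⁻¹ * k * g₀ ∈ H := fun k hk hkt => by
    have hkx₀ : k • x₀ ∈ t := hkt ▸ smul_mem_smul_set hx₀
    rw [mul_assoc]
    exact hsep.inv_mul_mem (K.mul_mem hk hg₀) hg₀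
      (by rw [mul_smul]; exact smul_mem_smul_set hx₀g₀) (htg₀ hkx₀) (by rwa [dist_self])
  obtain ⟨v, hv, hvfix, hvt⟩ := h𝒱.exists_mem (g₀⁻¹ • t) (subset_smul_set_iff.1 htg₀)
    ⟨_, smul_mem_smul_set hx₀⟩ (by rw [diam_smul]; exact htd.trans_le (min_le_left _ _))
  refine ⟨g₀ • v, ⟨g₀, hg₀, v, hv, rfl⟩, fun k hk hkt => ?_, fun x ⟨hxKN, hxt⟩ => ?_⟩
  · have hkt' : (g₀⁻¹ * k * g₀) • g₀⁻¹ • t = g₀⁻¹ • t := by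
      rw [mul_smul, smul_inv_smul, mul_smul, hkt]
    calc k • g₀ • v = g₀ • (g₀⁻¹ * k * g₀) • v := by simp only [mul_smul, smul_inv_smul]
      _ = g₀ • v := by rw [hvfix _ (hconj k hk hkt) hkt']
  obtain ⟨y, hy, hxy⟩ := mem_thickening_iff.1 hxt
  have hxg₀ := near hxKN (htg₀ hy) (hxy.trans_le (min_le_right _ _))
  refine mem_smul_set_iff_inv_smul_mem.2 (hvt ⟨mem_smul_set_iff_inv_smul_mem.1 hxg₀,
    mem_thickening_iff.2 ⟨g₀⁻¹ • y, smul_mem_smul_set hy, ?_⟩⟩)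
  rw [dist_smul]
  exact hxy.trans_le (min_le_left _ _)

theorem IsPieceCover.induce [CompactSpace Z] [Finite F] {n : ℕ} (hN : IsClosed N)
    (hNH : ∀ h ∈ H, h • N = N) (hρ : 0 < ρ) (hsep : TranslatesSeparated K H N ρ)
    {𝒱 : Set (Set Z)} {L q : ℝ} (h𝒱 : IsPieceCover H n N 𝒱 L q) :
    IsPieceCover K n (⋃ g ∈ K, g • N) {m | ∃ g ∈ K, ∃ v ∈ 𝒱, m = g • v} L (min q ρ) where
  isRelOpen := by
    rintro _ ⟨g, hg, v, hv, rfl⟩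
    exact hsep.isRelOpen_smul hρ hN hNH hg (h𝒱.isRelOpen v hv)
  smul_mem := by
    rintro g' hg' _ ⟨g, hg, v, hv, rfl⟩
    exact ⟨g' * g, K.mul_mem hg' hg, v, hv, (mul_smul g' g v).symm⟩
  exists_mem _ htKN ht htd := hsep.exists_mem hρ hNH h𝒱.toIsAdaptedFamily htKN ht htd
  q_pos := lt_min h𝒱.q_pos hρ
  q_le := (min_le_left _ _).trans h𝒱.q_le
  nonempty := by
    rintro _ ⟨g, -, v, hv, rfl⟩
    exact (h𝒱.nonempty v hv).smul_set
  diam_lt := by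
    rintro _ ⟨g, -, v, hv, rfl⟩
    rw [diam_smul]
    exact h𝒱.diam_lt v hv
  encard_le z hz := by
    obtain ⟨g₀, hg₀, hzg₀⟩ := mem_iUnion₂.1 hz
    refine (encard_le_of_subset_image (g₀ • ·) ?_).trans
      (h𝒱.encard_le _ (mem_smul_set_iff_inv_smul_mem.1 hzg₀))
    rintro _ ⟨⟨g, hg, v, hv, rfl⟩, hzv⟩
    have hH : g₀⁻¹ * g ∈ H := hsep.inv_mul_mem hg hg₀
      (smul_set_mono (h𝒱.isRelOpen v hv).subset hzv) hzg₀ (by rwa [dist_self])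
    refine ⟨(g₀⁻¹ * g) • v, ⟨h𝒱.smul_mem _ hH v hv, ?_⟩, by simp only [mul_smul, smul_inv_smul]⟩
    rw [mul_smul]
    exact smul_mem_smul_set hzv

lemma smul_tube (hAH : ∀ g ∈ H, g • A = A) {g : F} (hg : g ∈ H) :
    g • tube H A z₀ r = tube H A z₀ r :=
  smul_set_eq_of_forall_smul_mem (fun g hg x (hx : x ∈ tube H A z₀ r) => by
    obtain ⟨hxA, hx⟩ := hx
    obtain ⟨h, hh, hxh⟩ := mem_iUnion₂.1 hx
    refine ⟨smul_mem_of_smul_set_eq (hAH g hg) hxA, mem_iUnion₂.2 ⟨g * h, H.mul_mem hg hh, ?_⟩⟩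
    rw [mem_closedBall, mul_smul, dist_smul]
    exact hxh) hg

lemma translatesSeparated_tube (hHK : H ≤ K) (hr : 0 < r)
    (hgap : ∀ g ∈ K, g ∉ H → 2 * r < dist (g • z₀) z₀) :
    TranslatesSeparated K H (tube H A z₀ (r / 8)) r := by
  rintro g hg hgH x ⟨-, hx⟩ y ⟨-, hy⟩
  obtain ⟨h, hh, hxh⟩ := mem_iUnion₂.1 hx
  obtain ⟨h', hh', hyh'⟩ := mem_iUnion₂.1 hy
  have hK : h⁻¹ * g * h' ∈ K := K.mul_mem (K.mul_mem (K.inv_mem (hHK hh)) hg) (hHK hh')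
  have hH : h⁻¹ * g * h' ∉ H := fun hc => hgH <| by
    rw [show g = h * (h⁻¹ * g * h') * h'⁻¹ by group]
    exact H.mul_mem (H.mul_mem hh hc) (H.inv_mem hh')
  have hfar := hgap _ hK hH
  rw [← dist_smul h, smul_smul, show h * (h⁻¹ * g * h') = g * h' by group, dist_comm] at hfar
  have hgy : dist (g • y) ((g * h') • z₀) ≤ r / 8 := by
    rw [mul_smul, dist_smul]
    exact hyh'
  rw [mem_closedBall] at hxh
  linarith [dist_triangle4 (h • z₀) x (g • y) ((g * h') • z₀), dist_comm (h • z₀) x]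

variable (Z) in
def HasAdaptedRefinements (n : ℕ) (K : Subgroup F) : Prop :=
  ∀ A : Set Z, IsClosed A → (∀ g ∈ K, g • A = A) →
    ∀ (𝒰 : Set (Set Z)) (L : ℝ), 0 < L → IsAdaptedFamily K A 𝒰 L →
      ∃ 𝒲 : Set (Set Z), ∃ L' > 0, IsAdaptedFamily K A 𝒲 L' ∧ (∀ w ∈ 𝒲, ∃ u ∈ 𝒰, w ⊆ u) ∧
        ∀ z ∈ A, {w ∈ 𝒲 | z ∈ w}.encard ≤ n + 1

theorem HasAdaptedRefinements.exists_isPieceCover [CompactSpace Z] {n : ℕ}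
    (h : HasAdaptedRefinements Z n H) (hN : IsClosed N) (hNH : ∀ g ∈ H, g • N = N) {L : ℝ}
    (hL : 0 < L) : ∃ 𝒱 q, IsPieceCover H n N 𝒱 L q := by
  obtain ⟨𝒲, L', hL', h𝒲, hsub, hord⟩ :=
    h N hN hNH _ (L / 4) (by positivity) (isAdaptedFamily_diam_lt hNH hL)
  refine ⟨{w ∈ 𝒲 | w.Nonempty}, min L' L,
    { toIsAdaptedFamily := (h𝒲.sep_nonempty hL').mono (min_le_left _ _)
      q_pos := lt_min hL' hL
      q_le := min_le_right _ _
      nonempty := fun w hw => hw.2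
      diam_lt := fun w hw => ?_
      encard_le := fun z hz => (encard_le_encard ?_).trans (hord z hz) }⟩
  · obtain ⟨u, hu, hwu⟩ := hsub w hw.1
    exact (diam_mono hwu isBounded_of_compactSpace).trans_lt hu.2
  · exact fun w hw => ⟨hw.1.1, hw.2⟩

structure IsPiece (K : Subgroup F) (n : ℕ) (A B : Set Z) : Prop where
  isClosed : IsClosed B
  subset : B ⊆ A
  smul_eq : ∀ g ∈ K, g • B = B
  exists_isPieceCover : ∀ L > 0, ∃ ℳ q, IsPieceCover K n B ℳ L q

/-- Around a point moved by `K`, the `K`-saturation of a tube around its orbit under a proper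
subgroup `H` is a piece: the induction hypothesis for `H` covers the tube. -/
theorem exists_isPiece_ball [CompactSpace Z] [Finite F] {n : ℕ}
    (ih : ∀ H < K, HasAdaptedRefinements Z n H) (hA : IsClosed A) (hAK : ∀ g ∈ K, g • A = A)
    {σ : ℝ} (hσ : 0 < σ) (hmove : ∃ g ∈ K, σ ≤ dist (g • z₀) z₀) :
    ∃ r > 0, ∃ B, IsPiece K n A B ∧ A ∩ ball z₀ r ⊆ B := by
  obtain ⟨H, hHK, r, hr, hgap⟩ := exists_lt_subgroup_of_displacement K z₀ hσ hmove
  set N := tube H A z₀ (r / 8)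
  have hNH (h : F) (hh : h ∈ H) : h • N = N := smul_tube (fun h hh => hAK h (hHK.le hh)) hh
  refine ⟨r / 8, by positivity, ⋃ g ∈ K, g • N, ⟨?_, ?_, fun g hg => ?_, fun L hL => ?_⟩, ?_⟩
  · exact (toFinite _).isClosed_biUnion fun g _ => (isClosed_tube hA).smul g
  · refine iUnion₂_subset fun g hg => ?_
    rw [← hAK g hg]
    exact smul_set_mono inter_subset_left
  · refine smul_set_eq_of_forall_smul_mem (fun g hg x hx => ?_) hg
    obtain ⟨g', hg', hx⟩ := mem_iUnion₂.1 hx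
    exact mem_iUnion₂.2 ⟨g * g', K.mul_mem hg hg', by rw [mul_smul]; exact smul_mem_smul_set hx⟩
  · obtain ⟨𝒱, q, h𝒱⟩ := (ih H hHK).exists_isPieceCover (isClosed_tube hA) hNH hL
    exact ⟨_, _, h𝒱.induce (isClosed_tube hA) hNH hr (translatesSeparated_tube hHK.le hr hgap)⟩
  · rintro x ⟨hxA, hx⟩
    refine mem_iUnion₂.2 ⟨1, K.one_mem, ?_⟩
    rw [one_smul]
    exact ⟨hxA, mem_iUnion₂.2 ⟨1, H.one_mem, by rw [one_smul]; exact ball_subset_closedBall hx⟩⟩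

end Induction

section Main

variable {F Z : Type*} [Group F] [MetricSpace Z] [MulAction F Z] [IsIsometricSMul F Z]
  [CompactSpace Z] {K : Subgroup F} {A : Set Z} {n : ℕ}

theorem exists_refinement_of_isPiece (hAK : ∀ g ∈ K, g • A = A) {ι : Type*} (s : Finset ι)
    {B : ι → Set Z} (hB : ∀ i ∈ s, IsPiece K n A (B i)) {𝒲 : Set (Set Z)} {L : ℝ} (hL : 0 < L)
    (h𝒲 : IsAdaptedFamily K A 𝒲 L) {T : Set Z} (hT : ∀ z ∈ T, {w ∈ 𝒲 | z ∈ w}.encard ≤ n + 1) :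
    ∃ 𝒲' : Set (Set Z), ∃ L' > 0, IsAdaptedFamily K A 𝒲' L' ∧ (∀ w' ∈ 𝒲', ∃ w ∈ 𝒲, w' ⊆ w) ∧
      ∀ z ∈ T ∪ ⋃ i ∈ s, B i, {w ∈ 𝒲' | z ∈ w}.encard ≤ n + 1 := by
  classical
  induction s using Finset.induction_on with
  | empty => exact ⟨𝒲, L, hL, h𝒲, fun w hw => ⟨w, hw, subset_rfl⟩, by simpa using hT⟩
  | insert i s _ ih =>
    obtain ⟨𝒲₁, L₁, hL₁, h𝒲₁, hsub₁, hord₁⟩ := ih fun j hj => hB j (Finset.mem_insert_of_mem hj)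
    have hBi := hB i (Finset.mem_insert_self i s)
    obtain ⟨ℳ, q, hℳ⟩ := hBi.exists_isPieceCover L₁ hL₁
    obtain ⟨𝒲₂, h𝒲₂, hsub₂, hord₂⟩ :=
      exists_refinement_step hAK h𝒲₁ hord₁ hBi.isClosed hBi.subset hBi.smul_eq hℳ
    refine ⟨𝒲₂, q / 32, by linarith [hℳ.q_pos], h𝒲₂, fun w hw => ?_, fun z hz => hord₂ z ?_⟩
    · obtain ⟨w₁, hw₁, hww₁⟩ := hsub₂ w hw
      obtain ⟨w₀, hw₀, hw₁w₀⟩ := hsub₁ w₁ hw₁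
      exact ⟨w₀, hw₀, hww₁.trans hw₁w₀⟩
    · rw [Finset.set_biUnion_insert] at hz
      rcases hz with hz | hz | hz
      exacts [Or.inl (Or.inl hz), Or.inr hz, Or.inl (Or.inr hz)]

theorem hasAdaptedRefinements [Finite F] (hdim : CoverDimLE Z n) (K : Subgroup F) :
    HasAdaptedRefinements Z n K := by
  induction K using WellFoundedLT.induction with
  | _ K ih =>
  intro A hA hAK 𝒰 L hL h𝒰
  obtain ⟨ε, hε, ℳ, q, hℳ⟩ := exists_isPieceCover_nearlyFixed hdim K hAK hL
  obtain ⟨𝒲, h𝒲, hsub, hord⟩ := exists_refinement_step hAK h𝒰 (T := ∅) (by simp)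
    (isClosed_nearlyFixed hA ε) (nearlyFixed_subset ε) (fun g hg => smul_nearlyFixed hAK hg) hℳ
  set S := {z ∈ A | ∃ g ∈ K, ε ≤ dist (g • z) z}
  have hS : IsClosed S := by
    have : S = A ∩ ⋃ g ∈ (K : Set F), {z | ε ≤ dist (g • z) z} := by
      ext z
      simp [S]
    rw [this]
    exact hA.inter <| (toFinite _).isClosed_biUnion fun g _ =>
      isClosed_le continuous_const ((continuous_const_smul g).dist continuous_id)
  choose! r hr B hB hball using fun z (hz : z ∈ S) => exists_isPiece_ball ih hA hAK hε hz.2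
  obtain ⟨t, htS, hcov⟩ := hS.isCompact.elim_nhds_subcover (fun z => ball z (r z))
    fun z hz => ball_mem_nhds z (hr z hz)
  obtain ⟨𝒲', L', hL', h𝒲', hsub', hord'⟩ := exists_refinement_of_isPiece hAK t
    (fun z hz => hB z (htS z hz)) (by linarith [hℳ.q_pos]) h𝒲 hord
  refine ⟨𝒲', L', hL', h𝒲', fun w hw => ?_, fun z hz => hord' z ?_⟩
  · obtain ⟨w₁, hw₁, hww₁⟩ := hsub' w hw
    obtain ⟨u, hu, hw₁u⟩ := hsub w₁ hw₁
    exact ⟨u, hu, hww₁.trans hw₁u⟩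
  by_cases hfix : ∀ g ∈ K, dist (g • z) z ≤ ε
  · exact Or.inl (Or.inr ⟨hz, hfix⟩)
  · push Not at hfix
    obtain ⟨g, hg, hgz⟩ := hfix
    obtain ⟨i, hi, hzi⟩ := mem_iUnion₂.1 (hcov ⟨hz, g, hg, hgz.le⟩)
    exact Or.inr (mem_iUnion₂.2 ⟨i, hi, hball i (htS i hi) ⟨hz, hzi⟩⟩)

end Main

section Boundary

variable {Z : Type*} [MetricSpace Z] [CompactSpace Z]

theorem exists_forall_diam_lt_encard_le {𝒰 : Set (Set Z)} (hfin : 𝒰.Finite)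
    (hopen : ∀ u ∈ 𝒰, IsOpen u) {k : ℕ}
    (hbd : ∀ 𝒰₀ ⊆ 𝒰, (k : ℕ∞) < 𝒰₀.encard → ⋂ u ∈ 𝒰₀, frontier u = ∅) :
    ∃ ρ > 0, ∀ w : Set Z, diam w < ρ → {u ∈ 𝒰 | ¬w ⊆ u ∧ (u ∩ w).Nonempty}.encard ≤ k := by
  -- a subset of `V z` meeting `u ∈ 𝒰` without lying in it forces `z ∈ frontier u`
  set V : Z → Set Z := fun z =>
    (⋂ u ∈ {u ∈ 𝒰 | z ∈ u}, u) ∩ ⋂ u ∈ {u ∈ 𝒰 | z ∉ closure u}, (closure u)ᶜ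
  have hVopen (z : Z) : IsOpen (V z) :=
    ((hfin.subset (sep_subset _ _)).isOpen_biInter fun u hu => hopen u hu.1).inter
      ((hfin.subset (sep_subset _ _)).isOpen_biInter fun _ _ => isClosed_closure.isOpen_compl)
  have hzV (z : Z) : z ∈ V z := ⟨mem_iInter₂.2 fun _ hu => hu.2, mem_iInter₂.2 fun _ hu => hu.2⟩
  have hfront (z : Z) : {u ∈ 𝒰 | z ∈ frontier u}.encard ≤ k := by
    by_contra h
    have hz : z ∈ ⋂ u ∈ {u ∈ 𝒰 | z ∈ frontier u}, frontier u := mem_iInter₂.2 fun _ hu => hu.2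
    rwa [hbd _ (sep_subset _ _) (not_le.1 h)] at hz
  obtain ⟨ρ, hρ, hleb⟩ := lebesgue_number_lemma_of_metric isCompact_univ hVopen
    fun z _ => mem_iUnion.2 ⟨z, hzV z⟩
  refine ⟨ρ, hρ, fun w hw => ?_⟩
  rcases w.eq_empty_or_nonempty with rfl | ⟨y, hy⟩
  · simp
  obtain ⟨z, hz⟩ := hleb y (mem_univ y)
  have hwV : w ⊆ V z := fun x hx =>
    hz (mem_ball.2 ((dist_le_diam_of_mem isBounded_of_compactSpace hx hy).trans_lt hw))
  refine (encard_le_encard ?_).trans (hfront z)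
  rintro u ⟨hu, hwu, x, hxu, hxw⟩
  refine ⟨hu, ?_⟩
  rw [(hopen u hu).frontier_eq]
  constructor
  · by_contra hzu
    exact mem_iInter₂.1 (hwV hxw).2 u ⟨hu, hzu⟩ (subset_closure hxu)
  · exact fun hzu => hwu fun x' hx' => mem_iInter₂.1 (hwV hx').1 u ⟨hu, hzu⟩

end Boundary

end EquivariantCover

open EquivariantCover in
theorem stmt_17_general {Z : Type*} [MetricSpace Z] [CompactSpace Z]
    {F : Type*} [Group F] [Finite F] [MulAction F Z]
    (hiso : ∀ g : F, Isometry fun z : Z => g • z)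
    {n : ℕ} (hdim : CoverDimLE Z n) (k : ℕ)
    (𝒰 : Set (Set Z)) (hfin : 𝒰.Finite) (hopen : ∀ u ∈ 𝒰, IsOpen u)
    (hbd : ∀ 𝒰₀ ⊆ 𝒰, (k : ℕ∞) < 𝒰₀.encard → ⋂ u ∈ 𝒰₀, frontier u = ∅) :
    ∀ δ : ℝ, 0 < δ →
      ∃ 𝒲 : Set (Set Z),
        (∀ w ∈ 𝒲, IsOpen w) ∧ ⋃₀ 𝒲 = univ ∧
        (∀ z : Z, {w ∈ 𝒲 | z ∈ w}.encard ≤ n + 1) ∧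
        (∀ w ∈ 𝒲, Metric.diam w < δ) ∧
        (∀ w ∈ 𝒲, {u ∈ 𝒰 | ¬w ⊆ u ∧ (u ∩ w).Nonempty}.encard ≤ k) ∧
        (∀ g : F, ∀ w ∈ 𝒲, g • w ∈ 𝒲) := by
  intro δ hδ
  have : IsIsometricSMul F Z := ⟨hiso⟩
  obtain ⟨ρ, hρ, hcount⟩ := exists_forall_diam_lt_encard_le hfin hopen hbd
  have hε : 0 < min δ ρ := lt_min hδ hρ
  obtain ⟨𝒲, L, hL, h𝒲, hsub, hord⟩ := hasAdaptedRefinements hdim (⊤ : Subgroup F) univ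
    isClosed_univ (fun _ _ => smul_set_univ) _ _ (by positivity)
    (isAdaptedFamily_diam_lt (fun _ _ => smul_set_univ) hε)
  have hdiam (w : Set Z) (hw : w ∈ 𝒲) : diam w < min δ ρ := by
    obtain ⟨u, hu, hwu⟩ := hsub w hw
    exact (diam_mono hwu isBounded_of_compactSpace).trans_lt hu.2
  exact ⟨𝒲, fun w hw => (h𝒲.isRelOpen w hw).isOpen, univ_subset_iff.1 (h𝒲.subset_sUnion hL),
    fun z => hord z (mem_univ z), fun w hw => (hdiam w hw).trans_le (min_le_left _ _),
    fun w hw => hcount w ((hdiam w hw).trans_le (min_le_right _ _)),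
    fun g w hw => h𝒲.smul_mem g (Subgroup.mem_top g) w hw⟩

/-- Existence of a small equivariant cover: given a finite `F`-equivariant collection `𝒰`
of open subsets of a compact `n`-dimensional metric space such that any more than `k`
of the boundaries have empty intersection, for every `δ > 0` there is an `F`-equivariant
open cover `𝒲` of dimension `≤ n`, members of diameter `< δ`, each meeting at most `k`
members of `𝒰` that do not contain it. -/
theorem stmt_17 {Z : Type*} [MetricSpace Z] [CompactSpace Z]
    {F : Type*} [Group F] [Finite F] [MulAction F Z]
    (hiso : ∀ g : F, Isometry fun z : Z => g • z)
    {n : ℕ} (hdim : CoverDimLE Z n) (k : ℕ)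
    (𝒰 : Set (Set Z)) (hfin : 𝒰.Finite) (hopen : ∀ u ∈ 𝒰, IsOpen u)
    (hequi : ∀ g : F, ∀ u ∈ 𝒰, g • u ∈ 𝒰)
    (hbd : ∀ 𝒰₀ ⊆ 𝒰, (k : ℕ∞) < 𝒰₀.encard → ⋂ u ∈ 𝒰₀, frontier u = ∅) :
    ∀ δ : ℝ, 0 < δ →
      ∃ 𝒲 : Set (Set Z),
        (∀ w ∈ 𝒲, IsOpen w) ∧ ⋃₀ 𝒲 = univ ∧
        (∀ z : Z, {w ∈ 𝒲 | z ∈ w}.encard ≤ n + 1) ∧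
        (∀ w ∈ 𝒲, Metric.diam w < δ) ∧
        (∀ w ∈ 𝒲, {u ∈ 𝒰 | ¬w ⊆ u ∧ (u ∩ w).Nonempty}.encard ≤ k) ∧
        (∀ g : F, ∀ w ∈ 𝒲, g • w ∈ 𝒲) :=
  stmt_17_general hiso hdim k 𝒰 hfin hopen hbd
end

section
/- Let X and Y be metric spaces and f : X → Y a continuous, open surjection such that f⁻¹(y) is finite for every y ∈ Y. Then the covering dimensions of X and Y are equal. -/
/-!
Let `N y` be the number of points of the fibre over `y`. Since `f` is open, disjoint neighbourhoods
of the points of a fibre are mapped onto neighbourhoods of `y`; hence `N` is lower semicontinuous,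
and every `x` has an open neighbourhood `B` such that `f` is injective on `B ∩ f⁻¹' {N ≤ N (f x)}`.
Over a level set `L = {N = k}` the map `f` thus identifies `B ∩ f⁻¹' L` with `L ∩ f '' B`, and
these sets cover `f⁻¹' L` and `L` respectively.

Covering dimension of metric spaces is monotone, local (a set covered by open sets whose traces have
dimension `≤ n` has dimension `≤ n`) and satisfies the countable closed sum theorem. For the sum
theorem, take a locally finite refinement, shrink it to a closed cover of order `≤ n + 1` one
closed piece at a time, and swell it back; locality follows from the sum theorem through a
refinement whose levels are pairwise disjoint. The level sets of `N` and `N ∘ f` are intersections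
of a closed and an open set, hence countable unions of closed sets, so `Y` (resp. `X`) has
dimension `≤ n` once every `L` (resp. `f⁻¹' L`) has, which follows from locality, monotonicity
and the dimension of the other space.
-/

open Set

open Topology Metric ENNReal

universe u

section CoverDimOn

variable {Z : Type u} [TopologicalSpace Z] {n : ℕ}

structure IsShrinkingOfOrder {ι : Type*} (S : Set Z) (n : ℕ) (G V : ι → Set Z) : Prop where
  isOpen : ∀ i, IsOpen (V i)
  subset : ∀ i, V i ⊆ G i
  cover : S ⊆ ⋃ i, V i
  encard_le : ∀ x ∈ S, {i | x ∈ V i}.encard ≤ n + 1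

/-- The covering dimension of a subset `S`, measured with covers by open sets of the ambient
space, is at most `n`. -/
def CoverDimLEOn (S : Set Z) (n : ℕ) : Prop :=
  ∀ (ι : Type u) (G : ι → Set Z), (∀ i, IsOpen (G i)) → S ⊆ ⋃ i, G i →
    ∃ V : ι → Set Z, IsShrinkingOfOrder S n G V

theorem IsShrinkingOfOrder.mono {ι : Type*} {S T : Set Z} {G V : ι → Set Z}
    (h : IsShrinkingOfOrder T n G V) (hST : S ⊆ T) : IsShrinkingOfOrder S n G V :=
  ⟨h.isOpen, h.subset, hST.trans h.cover, fun x hx => h.encard_le x (hST hx)⟩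

theorem IsShrinkingOfOrder.regroup {ι κ : Type*} {S : Set Z} {G : ι → Set Z} {V : κ → Set Z}
    (c : κ → ι) (h : IsShrinkingOfOrder S n (G ∘ c) V) :
    IsShrinkingOfOrder S n G fun i => ⋃ (k) (_ : c k = i), V k where
  isOpen _ := isOpen_iUnion fun k => isOpen_iUnion fun _ => h.isOpen k
  subset _ := iUnion₂_subset fun k hk => hk ▸ h.subset k
  cover x hx := by
    obtain ⟨k, hk⟩ := mem_iUnion.1 (h.cover hx)
    exact mem_iUnion.2 ⟨c k, mem_iUnion₂.2 ⟨k, rfl, hk⟩⟩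
  encard_le x hx := by
    have : {i | x ∈ ⋃ (k) (_ : c k = i), V k} = c '' {k | x ∈ V k} := by
      ext i; simp [and_comm]
    exact this ▸ (encard_image_le _ _).trans (h.encard_le x hx)

theorem CoverDimLEOn.exists_shrinking {S : Set Z} (h : CoverDimLEOn S n) {ι : Type*}
    (G : ι → Set Z) (hGo : ∀ i, IsOpen (G i)) (hS : S ⊆ ⋃ i, G i) :
    ∃ V : ι → Set Z, IsShrinkingOfOrder S n G V := by
  choose c hc using fun g : range G => g.2
  obtain ⟨V, hV⟩ := h (range G) Subtype.val (by rintro ⟨_, i, rfl⟩; exact hGo i) (by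
    rwa [← sUnion_eq_iUnion, sUnion_range])
  refine ⟨_, IsShrinkingOfOrder.regroup (V := V) c ?_⟩
  rwa [show G ∘ c = Subtype.val from funext hc]

theorem coverDimLE_iff_coverDimLEOn_univ : CoverDimLE Z n ↔ CoverDimLEOn (univ : Set Z) n := by
  constructor
  · intro h ι G hGo hG
    obtain ⟨V, hVo, hVU, hVG, hVord⟩ :=
      h (range G) (forall_mem_range.2 hGo) (by rw [sUnion_range]; exact univ_subset_iff.1 hG)
    have (v : V) : ∃ i, (v : Set Z) ⊆ G i := by
      obtain ⟨_, ⟨i, rfl⟩, hi⟩ := hVG v v.2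
      exact ⟨i, hi⟩
    choose c hc using this
    refine ⟨_, IsShrinkingOfOrder.regroup c ⟨fun v => hVo v v.2, hc, ?_, fun x _ => ?_⟩⟩
    · rw [← sUnion_eq_iUnion, hVU]
    · rw [← Subtype.val_injective.encard_image]
      convert hVord x using 2
      ext v; simp [and_comm]
  · intro h U hUo hU
    obtain ⟨V, hV⟩ := h U Subtype.val (fun u => hUo u u.2) (by rw [← sUnion_eq_iUnion, hU])
    refine ⟨range V, forall_mem_range.2 hV.isOpen, ?_, forall_mem_range.2 fun u =>
      ⟨u, u.2, hV.subset u⟩, fun x => ?_⟩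
    · rw [sUnion_range]; exact univ_subset_iff.1 hV.cover
    · refine (encard_le_encard ?_).trans ((encard_image_le V _).trans (hV.encard_le x trivial))
      rintro _ ⟨⟨u, rfl⟩, hx⟩
      exact ⟨u, hx, rfl⟩

theorem CoverDimLEOn.inter_isClosed {S C : Set Z} (h : CoverDimLEOn S n) (hC : IsClosed C) :
    CoverDimLEOn (S ∩ C) n := by
  intro ι G hGo hG
  obtain ⟨V, hV⟩ := h (Option ι) (Option.elim · Cᶜ G)
    (by rintro (_ | i); exacts [hC.isOpen_compl, hGo i]) fun x hx => by
      by_cases hxC : x ∈ C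
      · obtain ⟨i, hi⟩ := mem_iUnion.1 (hG ⟨hx, hxC⟩)
        exact mem_iUnion.2 ⟨some i, hi⟩
      · exact mem_iUnion.2 ⟨none, hxC⟩
  refine ⟨V ∘ some, fun i => hV.isOpen _, fun i => hV.subset _, fun x hx => ?_, fun x hx => ?_⟩
  · obtain ⟨_ | i, hi⟩ := mem_iUnion.1 (hV.cover hx.1)
    · exact absurd hx.2 (hV.subset none hi)
    · exact mem_iUnion.2 ⟨i, hi⟩
  · rw [← (Option.some_injective ι).encard_image]
    exact (encard_le_encard (by rintro _ ⟨i, hi, rfl⟩; exact hi)).trans (hV.encard_le x hx.1)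

theorem coverDimLEOn_preimage_val_iff {S P : Set Z} :
    CoverDimLEOn ((↑) ⁻¹' P : Set S) n ↔ CoverDimLEOn (S ∩ P) n := by
  constructor
  · intro h ι G hGo hG
    obtain ⟨V, hV⟩ := h.exists_shrinking (fun i => (↑) ⁻¹' G i)
      (fun i => (hGo i).preimage continuous_subtype_val) fun x hx => by
        simpa using hG ⟨x.2, hx⟩
    choose W hWo hWV using fun i => isOpen_induced_iff.1 (hV.isOpen i)
    refine ⟨fun i => W i ∩ G i, fun i => (hWo i).inter (hGo i), fun i => inter_subset_right,
      fun x hx => ?_, fun x hx => ?_⟩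
    · obtain ⟨i, hi⟩ := mem_iUnion.1 (hV.cover (show ⟨x, hx.1⟩ ∈ _ from hx.2))
      rw [← hWV] at hi
      exact mem_iUnion.2 ⟨i, hi, hV.subset i (hWV i ▸ hi)⟩
    · refine (encard_le_encard fun i hi => ?_).trans (hV.encard_le ⟨x, hx.1⟩ hx.2)
      show _ ∈ V i
      rw [← hWV i]
      exact hi.1
  · intro h ι G hGo hG
    choose W hWo hWG using fun i => isOpen_induced_iff.1 (hGo i)
    obtain ⟨V, hV⟩ := h.exists_shrinking W hWo fun x hx => by
      obtain ⟨i, hi⟩ := mem_iUnion.1 (hG (show ⟨x, hx.1⟩ ∈ _ from hx.2))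
      exact mem_iUnion.2 ⟨i, by rwa [← hWG] at hi⟩
    refine ⟨fun i => ((↑) : S → Z) ⁻¹' V i, fun i => (hV.isOpen i).preimage continuous_subtype_val,
      fun i => hWG i ▸ preimage_mono (hV.subset i), fun x hx => ?_,
      fun x hx => hV.encard_le x ⟨x.2, hx⟩⟩
    simpa using hV.cover ⟨x.2, hx⟩

theorem coverDimLEOn_iUnion_of_pairwise_disjoint {κ : Type*} {P : κ → Set Z}
    (hPo : ∀ b, IsOpen (P b)) (hPd : Pairwise fun a b => Disjoint (P a) (P b))
    (hP : ∀ b, CoverDimLEOn (P b) n) :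
    CoverDimLEOn (⋃ b, P b) n := by
  intro ι G hGo hG
  choose V hV using fun b => (hP b).exists_shrinking G hGo ((subset_iUnion P b).trans hG)
  refine ⟨fun i => ⋃ b, V b i ∩ P b,
    fun i => isOpen_iUnion fun b => ((hV b).isOpen i).inter (hPo b),
    fun i => iUnion_subset fun b => inter_subset_left.trans ((hV b).subset i), fun x hx => ?_,
    fun x hx => ?_⟩ <;> obtain ⟨b, hb⟩ := mem_iUnion.1 hx
  · obtain ⟨i, hi⟩ := mem_iUnion.1 ((hV b).cover hb)
    exact mem_iUnion.2 ⟨i, mem_iUnion.2 ⟨b, hi, hb⟩⟩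
  · refine (encard_le_encard fun i hi => ?_).trans ((hV b).encard_le x hb)
    obtain ⟨c, hci, hc⟩ := mem_iUnion.1 hi
    obtain rfl : c = b := hPd.eq (not_disjoint_iff.2 ⟨x, hc, hb⟩)
    exact hci

end CoverDimOn

section Swelling

variable {Z : Type*} [PseudoEMetricSpace Z] {ι : Type*} {n : ℕ}

noncomputable def separationRadius (C : ι → Set Z) (n : ℕ) (x : Z) : ℝ≥0∞ :=
  ⨅ T : {T : Finset ι // T.card = n + 2}, T.1.sup fun i => infEDist x (C i)

theorem continuous_separationRadius (C : ι → Set Z) (n : ℕ) :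
    Continuous (separationRadius C n) := by
  refine continuous_of_le_add_edist 1 one_ne_top fun x y => ?_
  rw [one_mul, separationRadius, separationRadius, ENNReal.iInf_add]
  refine le_iInf fun T => (iInf_le _ T).trans (Finset.sup_le fun i hi => ?_)
  exact infEDist_le_infEDist_add_edist.trans
    (by gcongr; exact Finset.le_sup (f := fun i => infEDist y (C i)) hi)

theorem separationRadius_pos {C : ι → Set Z} (hCc : ∀ i, IsClosed (C i)) (hC : LocallyFinite C)
    (hord : ∀ x, {i | x ∈ C i}.encard ≤ n + 1) (x : Z) : 0 < separationRadius C n x := by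
  obtain ⟨δ, hδ, hball⟩ := EMetric.mem_nhds_iff.1 (hC.iInter_compl_mem_nhds hCc x)
  refine hδ.trans_le (le_iInf fun T => ?_)
  -- `n + 2` members cannot all contain `x`, and the others stay at distance `≥ δ` from `x`
  obtain ⟨i, hiT, hxi⟩ : ∃ i ∈ T.1, x ∉ C i := by
    by_contra! hT
    have : (T.1 : Set ι).encard ≤ n + 1 := (encard_le_encard fun i hi => hT i hi).trans (hord x)
    rw [encard_coe_eq_coe_finsetCard, T.2] at this
    norm_cast at this
    omega
  refine le_trans ?_ (Finset.le_sup (f := fun i => infEDist x (C i)) hiT)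
  refine le_infEDist.2 fun y hy => not_lt.1 fun hxy => ?_
  exact mem_iInter₂.1 (hball (mem_eball'.2 hxy)) i hxi hy

/-- Around `C i`, take the points closer to `C i` than the separation radius. -/
theorem exists_isOpen_swelling {C D : ι → Set Z} (hCc : ∀ i, IsClosed (C i))
    (hDo : ∀ i, IsOpen (D i)) (hCD : ∀ i, C i ⊆ D i) (hC : LocallyFinite C)
    (hord : ∀ x, {i | x ∈ C i}.encard ≤ n + 1) :
    ∃ W : ι → Set Z, (∀ i, IsOpen (W i)) ∧ (∀ i, C i ⊆ W i) ∧ (∀ i, W i ⊆ D i) ∧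
      ∀ x, {i | x ∈ W i}.encard ≤ n + 1 := by
  set ρ := separationRadius C n
  refine ⟨fun i => D i ∩ {x | infEDist x (C i) < ρ x},
    fun i => (hDo i).inter (isOpen_lt continuous_infEDist (continuous_separationRadius C n)),
    fun i x hx => ⟨hCD i hx, show infEDist x (C i) < ρ x by
      rw [infEDist_zero_of_mem hx]; exact separationRadius_pos hCc hC hord x⟩,
    fun i => inter_subset_left, fun x => not_lt.1 fun hlt => ?_⟩
  obtain ⟨T, hTsub, hTcard⟩ := exists_subset_encard_eq (Order.add_one_le_of_lt hlt)
  have hTfin : T.Finite := finite_of_encard_eq_coe hTcard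
  have hcard : hTfin.toFinset.card = n + 2 := by
    rw [← ENat.natCast_inj, ← hTfin.encard_eq_coe_toFinset_card, hTcard]; rfl
  have hlt : hTfin.toFinset.sup (fun i => infEDist x (C i)) < ρ x :=
    (Finset.sup_lt_iff (separationRadius_pos hCc hC hord x)).2 fun i hi =>
      (hTsub (hTfin.mem_toFinset.1 hi)).2
  exact hlt.not_ge (iInf_le _ (⟨_, hcard⟩ : {T : Finset ι // T.card = n + 2}))

end Swelling

theorem exists_forall_mem_of_antitone {α ι : Type*} {v : ℕ → ι → Set α} {x : α}
    (hx : ∀ k, x ∈ ⋃ i, v k i) (hanti : ∀ i, Antitone fun k => v k i)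
    (hfin : {i | x ∈ v 0 i}.Finite) : ∃ i, ∀ k, x ∈ v k i := by
  by_contra! h
  choose k hk using h
  obtain ⟨K, hK⟩ := (hfin.image k).bddAbove
  obtain ⟨i, hi⟩ := mem_iUnion.1 (hx K)
  exact hk i (hanti i (hK (mem_image_of_mem k (hanti i (Nat.zero_le K) hi))) hi)

section ClosedShrinking

variable {Z : Type u} [TopologicalSpace Z] [NormalSpace Z] {ι : Type*} {n : ℕ}

theorem CoverDimLEOn.exists_closure_subset {F : Set Z} (hF : CoverDimLEOn F n) (hFc : IsClosed F)
    {v : ι → Set Z} (hvo : ∀ i, IsOpen (v i)) (hvU : ⋃ i, v i = univ)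
    (hvfin : ∀ x, {i | x ∈ v i}.Finite) :
    ∃ w : ι → Set Z, (∀ i, IsOpen (w i)) ∧ ⋃ i, w i = univ ∧ (∀ i, closure (w i) ⊆ v i) ∧
      ∀ x ∈ F, {i | x ∈ w i}.encard ≤ n + 1 := by
  obtain ⟨w, hwU, hwo, hwv⟩ := exists_iUnion_eq_closure_subset hvo hvfin hvU
  obtain ⟨G, hG⟩ := hF.exists_shrinking w hwo (hwU ▸ subset_univ F)
  refine ⟨fun i => G i ∪ w i \ F, fun i => (hG.isOpen i).union ((hwo i).sdiff hFc),
    eq_univ_of_forall fun x => ?_, fun i => (closure_mono (union_subset (hG.subset i)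
      sdiff_subset)).trans (hwv i), fun x hx => ?_⟩
  · by_cases hxF : x ∈ F
    · obtain ⟨i, hi⟩ := mem_iUnion.1 (hG.cover hxF)
      exact mem_iUnion.2 ⟨i, Or.inl hi⟩
    · obtain ⟨i, hi⟩ := mem_iUnion.1 (hwU ▸ mem_univ x)
      exact mem_iUnion.2 ⟨i, Or.inr ⟨hi, hxF⟩⟩
  · refine (encard_le_encard fun i hi => ?_).trans (hG.encard_le x hx)
    exact hi.resolve_right fun h => h.2 hx

/-- Shrink the cover successively, improving its order on `F k` at step `k`, and take the
intersection; point-finiteness makes the intersection still a cover. -/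
theorem exists_closed_shrinking_of_iUnion_isClosed {U : ι → Set Z} (hUo : ∀ i, IsOpen (U i))
    (hUU : ⋃ i, U i = univ) (hUfin : ∀ x, {i | x ∈ U i}.Finite) {F : ℕ → Set Z}
    (hFc : ∀ k, IsClosed (F k)) (hFU : ⋃ k, F k = univ) (hF : ∀ k, CoverDimLEOn (F k) n) :
    ∃ C : ι → Set Z, (∀ i, IsClosed (C i)) ∧ (∀ i, C i ⊆ U i) ∧ ⋃ i, C i = univ ∧
      ∀ x, {i | x ∈ C i}.encard ≤ n + 1 := by
  let Cover := {v : ι → Set Z // (∀ i, IsOpen (v i)) ∧ ⋃ i, v i = univ ∧ ∀ i, v i ⊆ U i}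
  have step (k : ℕ) (v : Cover) : ∃ w : Cover, (∀ i, closure (w.1 i) ⊆ v.1 i) ∧
      ∀ x ∈ F k, {i | x ∈ w.1 i}.encard ≤ n + 1 := by
    obtain ⟨w, hwo, hwU, hwv, hwF⟩ := (hF k).exists_closure_subset (hFc k) v.2.1 v.2.2.1
      fun x => (hUfin x).subset fun i hi => v.2.2.2 i hi
    exact ⟨⟨w, hwo, hwU, fun i => subset_closure.trans ((hwv i).trans (v.2.2.2 i))⟩, hwv, hwF⟩
  choose next hclosure horder using step
  let v : ℕ → Cover := fun k => Nat.rec ⟨U, hUo, hUU, fun _ => subset_rfl⟩ next k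
  have hanti (i : ι) : Antitone fun k => (v k).1 i :=
    antitone_nat_of_succ_le fun k => subset_closure.trans (hclosure k (v k) i)
  refine ⟨fun i => ⋂ k, closure ((v k).1 i), fun i => isClosed_iInter fun _ => isClosed_closure,
    fun i => (iInter_subset _ 1).trans (hclosure 0 _ i), eq_univ_of_forall fun x => ?_,
    fun x => ?_⟩
  · obtain ⟨i, hi⟩ := exists_forall_mem_of_antitone (fun k => by rw [(v k).2.2.1]; trivial) hanti
      (hUfin x)
    exact mem_iUnion.2 ⟨i, mem_iInter.2 fun k => subset_closure (hi k)⟩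
  · obtain ⟨k, hk⟩ := mem_iUnion.1 (hFU ▸ mem_univ x)
    refine (encard_le_encard fun i hi => ?_).trans (horder k (v k) x hk)
    exact hclosure (k + 1) (v (k + 1)) i (mem_iInter.1 hi (k + 2))

end ClosedShrinking

section PseudoEMetric

variable {Z : Type u} [PseudoEMetricSpace Z] {n : ℕ}

theorem coverDimLEOn_univ_of_iUnion_isClosed {κ : Type*} [Countable κ] {F : κ → Set Z}
    (hFc : ∀ k, IsClosed (F k)) (hFU : ⋃ k, F k = univ) (hF : ∀ k, CoverDimLEOn (F k) n) :
    CoverDimLEOn (univ : Set Z) n := by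
  rcases isEmpty_or_nonempty κ with hκ | hκ
  · rw [← hFU, iUnion_of_empty]
    exact fun _ G hGo _ => ⟨G, hGo, fun _ => subset_rfl, empty_subset _, fun _ hx => hx.elim⟩
  obtain ⟨e, he⟩ := exists_surjective_nat κ
  intro ι U hUo hU
  obtain ⟨V, hVo, hVU, hVlf, hVsub⟩ := precise_refinement U hUo (univ_subset_iff.1 hU)
  obtain ⟨C, hCc, hCV, hCU, hCord⟩ := exists_closed_shrinking_of_iUnion_isClosed hVo hVU
    hVlf.point_finite (fun k => hFc (e k)) (by rw [← hFU, he.iUnion_comp F]) fun k => hF (e k)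
  obtain ⟨W, hWo, hCW, hWV, hWord⟩ := exists_isOpen_swelling hCc hVo hCV (hVlf.subset hCV) hCord
  exact ⟨W, hWo, fun i => (hWV i).trans (hVsub i), hCU ▸ iUnion_mono hCW, fun x _ => hWord x⟩

theorem CoverDimLEOn.of_iUnion_isClosed {κ : Type*} [Countable κ] {S : Set Z} {F : κ → Set Z}
    (hFc : ∀ k, IsClosed (F k)) (hS : S ⊆ ⋃ k, F k) (hF : ∀ k, CoverDimLEOn (S ∩ F k) n) :
    CoverDimLEOn S n := by
  rw [← inter_univ S, ← coverDimLEOn_preimage_val_iff, preimage_univ]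
  refine coverDimLEOn_univ_of_iUnion_isClosed (fun k => (hFc k).preimage continuous_subtype_val)
    (eq_univ_of_forall fun x => by simpa using hS x.2) fun k => ?_
  exact coverDimLEOn_preimage_val_iff.2 (hF k)

theorem CoverDimLEOn.mono {S T : Set Z} (h : CoverDimLEOn T n) (hST : S ⊆ T) :
    CoverDimLEOn S n := by
  intro ι G hGo hS
  obtain ⟨F, hFc, hFG, hFU, -⟩ := (isOpen_iUnion hGo).exists_iUnion_isClosed
  have : CoverDimLEOn ((⋃ i, G i) ∩ T) n := by
    refine .of_iUnion_isClosed hFc (hFU ▸ inter_subset_left) fun k => ?_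
    rw [inter_right_comm, inter_eq_right.2 (hFG k), inter_comm]
    exact h.inter_isClosed (hFc k)
  obtain ⟨V, hV⟩ := this ι G hGo inter_subset_left
  exact ⟨V, hV.mono (subset_inter hS hST)⟩

theorem exists_pairwise_disjoint_refinement {ι : Type*} {O : ι → Set Z} (hOo : ∀ i, IsOpen (O i))
    (hOU : ⋃ i, O i = univ) :
    ∃ D : ℕ → ι → Set Z, (∀ m i, IsOpen (D m i)) ∧ (∀ m i, D m i ⊆ O i) ∧
      ⋃ m, ⋃ i, D m i = univ ∧ ∀ m, Pairwise fun i j => Disjoint (D m i) (D m j) := by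
  obtain ⟨_, _⟩ := exists_wellFoundedLT ι
  -- the centres of the balls are taken with `i` the first index of a member containing them,
  -- which keeps centres with different indices `2 / m` apart
  let D (m : ℕ) (i : ι) : Set Z :=
    ⋃ (x) (_ : ∀ j < i, x ∉ O j) (_ : eball x (2 * (m : ℝ≥0∞)⁻¹) ⊆ O i), eball x (m : ℝ≥0∞)⁻¹
  have mem_D {m i y} : y ∈ D m i ↔ ∃ x, (∀ j < i, x ∉ O j) ∧ eball x (2 * (m : ℝ≥0∞)⁻¹) ⊆ O i ∧
      edist y x < (m : ℝ≥0∞)⁻¹ := by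
    simp only [D, mem_iUnion, exists_prop, mem_eball]
  have disjoint_of_lt (m : ℕ) {i j : ι} (hij : i < j) : Disjoint (D m i) (D m j) := by
    refine disjoint_left.2 fun y hyi hyj => ?_
    obtain ⟨a, -, ha, hya⟩ := mem_D.1 hyi
    obtain ⟨b, hb, -, hyb⟩ := mem_D.1 hyj
    refine hb i hij (ha (mem_eball.2 ?_))
    calc edist b a ≤ edist y b + edist y a := edist_triangle_left _ _ _
      _ < (m : ℝ≥0∞)⁻¹ + (m : ℝ≥0∞)⁻¹ := ENNReal.add_lt_add hyb hya
      _ = 2 * (m : ℝ≥0∞)⁻¹ := (two_mul _).symm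
  refine ⟨D, fun m i => isOpen_iUnion fun x => isOpen_iUnion fun _ => isOpen_iUnion fun _ =>
    isOpen_eball, fun m i y hy => ?_, eq_univ_of_forall fun x => ?_, fun m i j hij => ?_⟩
  · obtain ⟨x, -, hx, hyx⟩ := mem_D.1 hy
    exact hx (mem_eball.2 (hyx.trans_le (le_mul_of_one_le_left zero_le one_le_two)))
  · obtain ⟨i, hi, hmin⟩ := wellFounded_lt.has_min {i | x ∈ O i} (iUnion_eq_univ_iff.1 hOU x)
    obtain ⟨δ, hδ, hδi⟩ := EMetric.isOpen_iff.1 (hOo i) x hi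
    obtain ⟨m, hm⟩ := exists_inv_nat_lt (ENNReal.half_pos hδ.ne').ne'
    refine mem_iUnion₂.2 ⟨m, i, mem_D.2 ⟨x, fun j hj hxj => hmin j hxj hj,
      (eball_subset_eball (ENNReal.mul_le_of_le_div' hm.le)).trans hδi, ?_⟩⟩
    simp
  · rcases hij.lt_or_gt with h | h
    exacts [disjoint_of_lt m h, (disjoint_of_lt m h).symm]

theorem coverDimLEOn_univ_of_isOpen_cover {κ : Type*} {O : κ → Set Z} (hOo : ∀ b, IsOpen (O b))
    (hOU : ⋃ b, O b = univ) (hO : ∀ b, CoverDimLEOn (O b) n) : CoverDimLEOn (univ : Set Z) n := by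
  obtain ⟨D, hDo, hDO, hDU, hDdisj⟩ := exists_pairwise_disjoint_refinement hOo hOU
  choose F hFc hFD hFU using fun m => (isOpen_iUnion (hDo m)).exists_iUnion_isClosed
  refine coverDimLEOn_univ_of_iUnion_isClosed (F := fun p : ℕ × ℕ => F p.1 p.2)
    (fun p => hFc _ _) (eq_univ_of_forall fun x => ?_) fun p => ?_
  · obtain ⟨m, hm⟩ := mem_iUnion.1 (hDU ▸ mem_univ x)
    obtain ⟨j, hj⟩ := mem_iUnion.1 ((hFU m).1 ▸ hm)
    exact mem_iUnion.2 ⟨(m, j), hj⟩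
  · exact (coverDimLEOn_iUnion_of_pairwise_disjoint (hDo p.1) (hDdisj p.1)
      fun b => (hO b).mono (hDO p.1 b)).mono (hFD p.1 p.2)

theorem CoverDimLEOn.of_isOpen_cover {κ : Type*} {S : Set Z} {O : κ → Set Z}
    (hOo : ∀ b, IsOpen (O b)) (hS : S ⊆ ⋃ b, O b) (hO : ∀ b, CoverDimLEOn (S ∩ O b) n) :
    CoverDimLEOn S n := by
  rw [← inter_univ S, ← coverDimLEOn_preimage_val_iff, preimage_univ]
  exact coverDimLEOn_univ_of_isOpen_cover (fun b => (hOo b).preimage continuous_subtype_val)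
    (eq_univ_of_forall fun x => by simpa using hS x.2) fun b =>
      coverDimLEOn_preimage_val_iff.2 (hO b)

theorem coverDimLEOn_univ_of_lowerSemicontinuous {g : Z → ℕ} (hg : LowerSemicontinuous g)
    (h : ∀ k, CoverDimLEOn (g ⁻¹' {k}) n) : CoverDimLEOn (univ : Set Z) n := by
  have hopen (k : ℕ) : IsOpen (g ⁻¹' Ici k) := by
    cases k with
    | zero => simp
    | succ k =>
      rw [show Ici (k + 1) = Ioi k from Set.ext fun m => Nat.lt_iff_add_one_le.symm]
      exact hg.isOpen_preimage k
  choose F hFc hFsub hFU using fun k => (hopen k).exists_iUnion_isClosed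
  refine coverDimLEOn_univ_of_iUnion_isClosed (F := fun p : ℕ × ℕ => g ⁻¹' Iic p.1 ∩ F p.1 p.2)
    (fun p => (hg.isClosed_preimage p.1).inter (hFc _ _)) (eq_univ_of_forall fun x => ?_)
    fun p => (h p.1).mono fun x hx => ?_
  · have hx : x ∈ g ⁻¹' Ici (g x) := le_refl (g x)
    obtain ⟨j, hj⟩ := mem_iUnion.1 ((hFU (g x)).1.symm ▸ hx)
    exact mem_iUnion.2 ⟨(g x, j), le_refl (g x), hj⟩
  · exact le_antisymm hx.1 (hFsub _ _ hx.2)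

end PseudoEMetric

section PairwiseDisjoint

variable {α β : Type*} {s : Set α} {t : Set β} {U : α → Set β}

theorem Set.PairwiseDisjoint.injOn_of_forall_mem {g : α → β} (hU : s.PairwiseDisjoint U)
    (hg : ∀ a ∈ s, g a ∈ U a) : InjOn g s :=
  fun a ha a' ha' h => hU.elim_set ha ha' (g a) (hg a ha) (h ▸ hg a' ha')

theorem ncard_le_ncard_of_pairwiseDisjoint (hU : s.PairwiseDisjoint U)
    (hst : ∀ a ∈ s, (t ∩ U a).Nonempty) (ht : t.Finite) : s.ncard ≤ t.ncard := by
  rcases s.eq_empty_or_nonempty with rfl | ⟨a, ha⟩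
  · simp
  have : Nonempty β := ⟨(hst a ha).some⟩
  choose! g hg using hst
  rw [← (hU.injOn_of_forall_mem fun a ha => (hg a ha).2).ncard_image]
  exact ncard_le_ncard (image_subset_iff.2 fun a ha => (hg a ha).1) ht

theorem subsingleton_inter_of_ncard_le (hU : s.PairwiseDisjoint U)
    (hst : ∀ a ∈ s, (t ∩ U a).Nonempty) (hs : s.Finite) (ht : t.Finite) (hts : t.ncard ≤ s.ncard)
    {a : α} (ha : a ∈ s) : (t ∩ U a).Subsingleton := by
  intro z hz z' hz'
  by_contra hne
  have : Nonempty β := ⟨z⟩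
  choose! g hg using hst
  -- a second point of `t ∩ U a` would be missed by the injection `g`, so `t` would be too large
  obtain ⟨w, hw, hwa⟩ : ∃ w ∈ t ∩ U a, w ≠ g a := by
    by_cases hz : z = g a
    exacts [⟨z', hz', hz ▸ Ne.symm hne⟩, ⟨z, ‹_›, hz⟩]
  have hmiss : w ∉ g '' s := by
    rintro ⟨a', ha', rfl⟩
    exact hwa (by rw [hU.elim_set ha' ha _ (hg a' ha').2 hw.2])
  have := ncard_le_ncard (insert_subset hw.1 (image_subset_iff.2 fun a ha => (hg a ha).1)) ht
  rw [ncard_insert_of_notMem hmiss (hs.image g),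
    (hU.injOn_of_forall_mem fun a ha => (hg a ha).2).ncard_image] at this
  omega

end PairwiseDisjoint

section OpenMap

variable {X Y : Type*} [TopologicalSpace X] [TopologicalSpace Y] {f : X → Y}

theorem IsOpenMap.exists_pairwiseDisjoint_forall_inter_nonempty [T2Space X] (hopen : IsOpenMap f)
    {y : Y} (hy : (f ⁻¹' {y}).Finite) :
    ∃ U : X → Set X, (∀ x, IsOpen (U x)) ∧ (∀ x, x ∈ U x) ∧ (f ⁻¹' {y}).PairwiseDisjoint U ∧
      ∀ᶠ y' in 𝓝 y, ∀ x ∈ f ⁻¹' {y}, (f ⁻¹' {y'} ∩ U x).Nonempty := by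
  obtain ⟨U, hU, hdisj⟩ := hy.t2_separation
  refine ⟨U, fun x => (hU x).2, fun x => (hU x).1, hdisj, hy.eventually_all.2 fun x hx => ?_⟩
  rw [← mem_singleton_iff.1 hx]
  filter_upwards [hopen.image_mem_nhds ((hU x).2.mem_nhds (hU x).1)]
  rintro _ ⟨z, hz, rfl⟩
  exact ⟨z, rfl, hz⟩

theorem IsOpenMap.lowerSemicontinuous_ncard_fiber [T2Space X] (hopen : IsOpenMap f)
    (hfib : ∀ y, (f ⁻¹' {y}).Finite) : LowerSemicontinuous fun y => (f ⁻¹' {y}).ncard := by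
  intro y k hk
  obtain ⟨U, -, -, hdisj, hU⟩ := hopen.exists_pairwiseDisjoint_forall_inter_nonempty (hfib y)
  filter_upwards [hU] with y' hy'
  exact hk.trans_le (ncard_le_ncard_of_pairwiseDisjoint hdisj hy' (hfib y'))

theorem IsOpenMap.exists_isOpen_injOn_ncard_fiber_le [T2Space X] (hcont : Continuous f)
    (hopen : IsOpenMap f) (hfib : ∀ y, (f ⁻¹' {y}).Finite) (x : X) :
    ∃ B, IsOpen B ∧ x ∈ B ∧
      InjOn f (B ∩ f ⁻¹' {y | (f ⁻¹' {y}).ncard ≤ (f ⁻¹' {f x}).ncard}) := by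
  obtain ⟨U, hUo, hxU, hdisj, hU⟩ :=
    hopen.exists_pairwiseDisjoint_forall_inter_nonempty (hfib (f x))
  obtain ⟨W, hWU, hWo, hxW⟩ := mem_nhds_iff.1 hU
  refine ⟨U x ∩ f ⁻¹' W, (hUo x).inter (hWo.preimage hcont), ⟨hxU x, hxW⟩, ?_⟩
  rintro z ⟨⟨hzU, hzW⟩, hzN⟩ z' ⟨⟨hz'U, -⟩, -⟩ hzz'
  exact subsingleton_inter_of_ncard_le hdisj (hWU hzW) (hfib _) (hfib _) hzN rfl ⟨rfl, hzU⟩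
    ⟨hzz'.symm, hz'U⟩

variable {n : ℕ} {B : Set X} {A : Set Y}

theorem CoverDimLEOn.image_inter_of_injOn (hcont : Continuous f) (hopen : IsOpenMap f)
    (hB : IsOpen B) (hinj : InjOn f (B ∩ f ⁻¹' A)) (h : CoverDimLEOn (B ∩ f ⁻¹' A) n) :
    CoverDimLEOn (A ∩ f '' B) n := by
  intro ι G hGo hG
  obtain ⟨V, hV⟩ := h.exists_shrinking (fun i => f ⁻¹' G i) (fun i => (hGo i).preimage hcont)
    fun z hz => by simpa using hG ⟨hz.2, z, hz.1, rfl⟩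
  refine ⟨fun i => f '' (V i ∩ B), fun i => hopen _ ((hV.isOpen i).inter hB),
    fun i => image_subset_iff.2 (inter_subset_left.trans (hV.subset i)), ?_, ?_⟩
  · rintro _ ⟨hA, z, hz, rfl⟩
    obtain ⟨i, hi⟩ := mem_iUnion.1 (hV.cover ⟨hz, hA⟩)
    exact mem_iUnion.2 ⟨i, z, ⟨hi, hz⟩, rfl⟩
  · rintro _ ⟨hA, z, hz, rfl⟩
    refine (encard_le_encard ?_).trans (hV.encard_le z ⟨hz, hA⟩)
    rintro i ⟨w, ⟨hwV, hwB⟩, hwz⟩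
    rwa [← hinj ⟨hwB, show f w ∈ A from hwz ▸ hA⟩ ⟨hz, hA⟩ hwz]

theorem CoverDimLEOn.preimage_inter_of_injOn (hcont : Continuous f) (hopen : IsOpenMap f)
    (hB : IsOpen B) (hinj : InjOn f (B ∩ f ⁻¹' A)) (h : CoverDimLEOn (A ∩ f '' B) n) :
    CoverDimLEOn (B ∩ f ⁻¹' A) n := by
  intro ι G hGo hG
  obtain ⟨V, hV⟩ := h.exists_shrinking (fun i => f '' (G i ∩ B))
    (fun i => hopen _ ((hGo i).inter hB)) fun y hy => by
      obtain ⟨hA, z, hz, rfl⟩ := hy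
      obtain ⟨i, hi⟩ := mem_iUnion.1 (hG ⟨hz, hA⟩)
      exact mem_iUnion.2 ⟨i, z, ⟨hi, hz⟩, rfl⟩
  have mem_G {i z} (hz : z ∈ B ∩ f ⁻¹' A) (hzV : f z ∈ V i) : z ∈ G i := by
    obtain ⟨w, ⟨hwG, hwB⟩, hwz⟩ := hV.subset i hzV
    rwa [← hinj ⟨hwB, show f w ∈ A from hwz ▸ hz.2⟩ hz hwz]
  refine ⟨fun i => B ∩ f ⁻¹' V i ∩ G i,
    fun i => (hB.inter ((hV.isOpen i).preimage hcont)).inter (hGo i), fun i => inter_subset_right,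
    fun z hz => ?_, fun z hz => ?_⟩
  · obtain ⟨i, hi⟩ := mem_iUnion.1 (hV.cover ⟨hz.2, z, hz.1, rfl⟩)
    exact mem_iUnion.2 ⟨i, ⟨hz.1, hi⟩, mem_G hz hi⟩
  · exact (encard_le_encard fun i hi => hi.1.2).trans (hV.encard_le _ ⟨hz.2, z, hz.1, rfl⟩)

end OpenMap

section

variable {X Y : Type*} [EMetricSpace X] [PseudoEMetricSpace Y] {f : X → Y} {n : ℕ}

theorem coverDimLE_of_isOpenMap_of_surjective (hcont : Continuous f) (hopen : IsOpenMap f)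
    (hsurj : Function.Surjective f) (hfib : ∀ y, (f ⁻¹' {y}).Finite) (hX : CoverDimLE X n) :
    CoverDimLE Y n := by
  rw [coverDimLE_iff_coverDimLEOn_univ] at hX ⊢
  choose B hBo hxB hinj using hopen.exists_isOpen_injOn_ncard_fiber_le hcont hfib
  refine coverDimLEOn_univ_of_lowerSemicontinuous (hopen.lowerSemicontinuous_ncard_fiber hfib)
    fun k => .of_isOpen_cover (O := fun x : {x // (f ⁻¹' {f x}).ncard = k} => f '' B x)
      (fun x => hopen _ (hBo x)) (fun y hy => ?_) fun x => ?_
  · obtain ⟨x, rfl⟩ := hsurj y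
    exact mem_iUnion.2 ⟨⟨x, hy⟩, x, hxB x, rfl⟩
  · refine (hX.mono (subset_univ _)).image_inter_of_injOn hcont hopen (hBo x) ((hinj x).mono ?_)
    exact inter_subset_inter_right _ (preimage_mono fun y (hy : _ = k) => (hy.trans x.2.symm).le)

theorem coverDimLE_of_isOpenMap (hcont : Continuous f) (hopen : IsOpenMap f)
    (hfib : ∀ y, (f ⁻¹' {y}).Finite) (hY : CoverDimLE Y n) : CoverDimLE X n := by
  rw [coverDimLE_iff_coverDimLEOn_univ] at hY ⊢
  choose B hBo hxB hinj using hopen.exists_isOpen_injOn_ncard_fiber_le hcont hfib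
  refine coverDimLEOn_univ_of_lowerSemicontinuous
    ((hopen.lowerSemicontinuous_ncard_fiber hfib).comp hcont)
    fun k => .of_isOpen_cover (O := fun x : {x // (f ⁻¹' {f x}).ncard = k} => B x) (fun x => hBo x)
      (fun x hx => mem_iUnion.2 ⟨⟨x, hx⟩, hxB x⟩) fun x => ?_
  rw [inter_comm]
  refine (hY.mono (subset_univ _)).preimage_inter_of_injOn (A := {y | (f ⁻¹' {y}).ncard = k})
    hcont hopen (hBo x) ((hinj x).mono ?_)
  exact inter_subset_inter_right _ (preimage_mono fun y (hy : _ = k) => (hy.trans x.2.symm).le)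

end

/-- A continuous open surjection between metric spaces with finite fibers
preserves the covering dimension. -/
theorem stmt_19 {X Y : Type*} [MetricSpace X] [MetricSpace Y] (f : X → Y)
    (hcont : Continuous f) (hopen : IsOpenMap f) (hsurj : Function.Surjective f)
    (hfib : ∀ y : Y, (f ⁻¹' {y}).Finite) :
    ∀ n : ℕ, CoverDimLE X n ↔ CoverDimLE Y n := fun _ =>
  ⟨coverDimLE_of_isOpenMap_of_surjective hcont hopen hsurj hfib,
    coverDimLE_of_isOpenMap hcont hopen hfib⟩
end
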